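/- arXiv:1003.2338 — 5 statements merged into one kernel-verified Lean document; each statement's English description precedes it below -/
import Mathlib

section
/- Let A, B be positive semidefinite matrices in Mₙ(ℂ) forming a monotone pair, i.e., A = f(C), B = g(C) for some positive semidefinite C and nondecreasing nonnegative functions f, g on [0,∞). Then for every self-adjoint projection E ∈ Mₙ(ℂ) there exists a unitary V with |AEB| ≤ V |ABE| V*. -/
open scoped Matrix ComplexOrder

/-- `A^p` for a matrix, via continuous functional calculus with the real power function. -/
noncomputable def mpow {n : ℕ} (A : Matrix (Fin n) (Fin n) ℂ) (p : ℝ) : Matrix (Fin n) (Fin n) ℂ :=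
  cfc (fun x : ℝ => x ^ p) A

/-- Matrix absolute value `|X| = (XᴴX)^{1/2}`. -/
noncomputable def matAbs {n : ℕ} (X : Matrix (Fin n) (Fin n) ℂ) : Matrix (Fin n) (Fin n) ℂ :=
  cfc Real.sqrt (Xᴴ * X)

/-- Loewner order: `X ≤ Y` iff `Y - X` is positive semidefinite. -/
def loewnerLE {n : ℕ} (X Y : Matrix (Fin n) (Fin n) ℂ) : Prop := (Y - X).PosSemidef

/-- `(A, B)` is a monotone pair: `A = f(C)`, `B = g(C)` for some positive semidefinite `C` and
nonnegative nondecreasing functions `f`, `g` on `[0, ∞)`. -/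
def MonotonePair {n : ℕ} (A B : Matrix (Fin n) (Fin n) ℂ) : Prop :=
  ∃ (C : Matrix (Fin n) (Fin n) ℂ) (f g : ℝ → ℝ), C.PosSemidef ∧
    MonotoneOn f (Set.Ici 0) ∧ MonotoneOn g (Set.Ici 0) ∧
    (∀ x ∈ Set.Ici (0 : ℝ), 0 ≤ f x) ∧ (∀ x ∈ Set.Ici (0 : ℝ), 0 ≤ g x) ∧
    A = cfc f C ∧ B = cfc g C

/-!
Write `X = AEB`, `Y = ABE` and, for a vector `v`, `u = EBv`. As `E` is an orthogonal projection and
`B` is self-adjoint, `‖u‖² = ⟪v, Bu⟫ ≤ ‖v‖ ‖Bu‖`. As `A = f(C)` and `B = g(C)` with `f`, `g`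
nondecreasing, Chebyshev's sum inequality in an eigenbasis of `C` gives
`‖Au‖ ‖Bu‖ ≤ ‖ABu‖ ‖u‖`. Since `Xv = Au` and `Yu = ABu`, together they give
`‖Xv‖ ‖u‖ ≤ ‖v‖ ‖Yu‖`. By the Courant–Fischer min-max principle, this comparison along
`v ↦ EBv` yields `sₖ(X) ≤ sₖ(Y)` for every singular value. Diagonalising `|X|` and `|Y|` in
eigenbases ordered the same way then produces the unitary `V`.
-/

open Finset Module InnerProductSpace

theorem Monovary.sum_mul_sum_le_sum_mul_sum {ι : Type*} [Fintype ι] {w f g : ι → ℝ}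
    (hw : 0 ≤ w) (hfg : Monovary f g) :
    (∑ i, f i * w i) * ∑ i, g i * w i ≤ (∑ i, f i * g i * w i) * ∑ i, w i := by
  have key : 0 ≤ ∑ i, ∑ j, w i * w j * ((f j - f i) * (g j - g i)) :=
    sum_nonneg fun i _ ↦ sum_nonneg fun j _ ↦
      mul_nonneg (mul_nonneg (hw i) (hw j)) (hfg.sub_mul_sub_nonneg i j)
  have expand : ∑ i, ∑ j, w i * w j * ((f j - f i) * (g j - g i)) =
      ((∑ i, w i) * ∑ i, f i * g i * w i + (∑ i, f i * g i * w i) * ∑ i, w i) -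
        ((∑ i, f i * w i) * ∑ i, g i * w i + (∑ i, g i * w i) * ∑ i, f i * w i) := by
    simp only [sum_mul_sum, ← sum_add_distrib, ← sum_sub_distrib]
    exact sum_congr rfl fun i _ ↦ sum_congr rfl fun j _ ↦ by ring
  linarith

theorem OrthonormalBasis.norm_sq_apply_eq_sum {𝕜 E ι : Type*} [RCLike 𝕜] [NormedAddCommGroup E]
    [InnerProductSpace 𝕜 E] [Fintype ι] (b : OrthonormalBasis ι 𝕜 E) {M : E →ₗ[𝕜] E}
    {d : ι → 𝕜} (hM : ∀ i, M (b i) = d i • b i) (v : E) :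
    ‖M v‖ ^ 2 = ∑ i, ‖d i‖ ^ 2 * ‖⟪b i, v⟫_𝕜‖ ^ 2 := by
  have hMv : M v = ∑ i, (d i * ⟪b i, v⟫_𝕜) • b i := by
    conv_lhs => rw [← b.sum_repr' v]
    simp only [map_sum, map_smul, hM, smul_smul, mul_comm]
  rw [← b.sum_sq_norm_inner_right, hMv]
  simp only [b.orthonormal.inner_right_fintype, norm_mul, mul_pow]

namespace LinearMap

variable {𝕜 E F : Type*} [RCLike 𝕜] [NormedAddCommGroup E] [InnerProductSpace 𝕜 E]
  [NormedAddCommGroup F] [InnerProductSpace 𝕜 F]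

theorem IsSymmetric.norm_sq_apply_le {P B : E →ₗ[𝕜] E} (hP : P.IsSymmetric)
    (hPP : IsIdempotentElem P) (hB : B.IsSymmetric) (v : E) :
    ‖P (B v)‖ ^ 2 ≤ ‖v‖ * ‖B (P (B v))‖ := by
  have hPP' : P (P (B v)) = P (B v) := by rw [← Module.End.mul_apply, hPP.eq]
  calc ‖P (B v)‖ ^ 2 = RCLike.re ⟪P (B v), P (B v)⟫_𝕜 := norm_sq_eq_re_inner _
    _ = RCLike.re ⟪v, B (P (B v))⟫_𝕜 := by rw [hP, hPP', hB]
    _ ≤ ‖v‖ * ‖B (P (B v))‖ := re_inner_le_norm _ _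

variable [FiniteDimensional 𝕜 E] [FiniteDimensional 𝕜 F]

theorem IsSymmetric.re_inner_apply_self_eq_sum {T : E →ₗ[𝕜] E} (hT : T.IsSymmetric) {n : ℕ}
    (hn : finrank 𝕜 E = n) (v : E) :
    RCLike.re ⟪T v, v⟫_𝕜 =
      ∑ i, hT.eigenvalues hn i * ‖⟪hT.eigenvectorBasis hn i, v⟫_𝕜‖ ^ 2 := by
  rw [← (hT.eigenvectorBasis hn).sum_inner_mul_inner, map_sum]
  refine Finset.sum_congr rfl fun i _ ↦ ?_
  rw [hT, apply_eigenvectorBasis, inner_smul_right, ← inner_conj_symm v, mul_assoc,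
    RCLike.conj_mul, ← RCLike.ofReal_pow, ← RCLike.ofReal_mul, RCLike.ofReal_re]

variable (T : E →ₗ[𝕜] F)

noncomputable def rightSingularVectors : OrthonormalBasis (Fin (finrank 𝕜 E)) 𝕜 E :=
  T.isSymmetric_adjoint_comp_self.eigenvectorBasis rfl

theorem norm_apply_sq_eq_sum (v : E) :
    ‖T v‖ ^ 2 =
      ∑ i : Fin (finrank 𝕜 E), T.singularValues i ^ 2 * ‖⟪T.rightSingularVectors i, v⟫_𝕜‖ ^ 2 := by
  simp_rw [T.sq_singularValues_fin rfl, rightSingularVectors,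
    ← T.isSymmetric_adjoint_comp_self.re_inner_apply_self_eq_sum, comp_apply,
    adjoint_inner_left, ← norm_sq_eq_re_inner]

theorem singularValues_mul_norm_le_norm_apply {k : ℕ} {v : E}
    (hv : ∀ i : Fin (finrank 𝕜 E), k < i → ⟪T.rightSingularVectors i, v⟫_𝕜 = 0) :
    T.singularValues k * ‖v‖ ≤ ‖T v‖ := by
  have hσv := mul_nonneg (T.singularValues_nonneg k) (norm_nonneg v)
  refine (pow_le_pow_iff_left₀ hσv (norm_nonneg _) two_ne_zero).mp ?_
  rw [mul_pow, ← T.rightSingularVectors.sum_sq_norm_inner_right, Finset.mul_sum,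
    norm_apply_sq_eq_sum]
  refine Finset.sum_le_sum fun i _ ↦ ?_
  rcases le_or_gt (i : ℕ) k with hik | hki
  · exact mul_le_mul_of_nonneg_right (pow_le_pow_left₀ (T.singularValues_nonneg _)
      (T.singularValues_antitone hik) 2) (by positivity)
  · simp [hv i hki]

theorem norm_apply_le_singularValues_mul_norm {k : ℕ} {v : E}
    (hv : ∀ i : Fin (finrank 𝕜 E), (i : ℕ) < k → ⟪T.rightSingularVectors i, v⟫_𝕜 = 0) :
    ‖T v‖ ≤ T.singularValues k * ‖v‖ := by
  have hσv := mul_nonneg (T.singularValues_nonneg k) (norm_nonneg v)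
  refine (pow_le_pow_iff_left₀ (norm_nonneg _) hσv two_ne_zero).mp ?_
  rw [mul_pow, ← T.rightSingularVectors.sum_sq_norm_inner_right, Finset.mul_sum,
    norm_apply_sq_eq_sum]
  refine Finset.sum_le_sum fun i _ ↦ ?_
  rcases lt_or_ge (i : ℕ) k with hik | hki
  · simp [hv i hik]
  · exact mul_le_mul_of_nonneg_right (pow_le_pow_left₀ (T.singularValues_nonneg _)
      (T.singularValues_antitone hki) 2) (by positivity)

-- A subspace of dimension `> k` meets the span of the right singular vectors from index `k` on.
theorem le_singularValues_of_forall_mul_norm_le {V : Submodule 𝕜 E} {k : ℕ}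
    (hk : k < finrank 𝕜 V) {s : ℝ} (hs : ∀ v ∈ V, s * ‖v‖ ≤ ‖T v‖) : s ≤ T.singularValues k := by
  let ι := {i : Fin (finrank 𝕜 E) // (i : ℕ) < k}
  let coords : V →ₗ[𝕜] ι → 𝕜 :=
    LinearMap.pi fun i ↦ (innerₛₗ 𝕜 (T.rightSingularVectors i)).comp V.subtype
  have hcard : finrank 𝕜 (ι → 𝕜) < finrank 𝕜 V := by
    rw [Module.finrank_fintype_fun_eq_card]
    have hinj : Function.Injective fun i : ι ↦ (⟨i.1, i.2⟩ : Fin k) := fun i j h ↦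
      Subtype.ext (Fin.ext (by simpa using h))
    exact ((Fintype.card_le_of_injective _ hinj).trans_eq (Fintype.card_fin k)).trans_lt hk
  obtain ⟨w, hw, hw0⟩ := (Submodule.ne_bot_iff _).mp (LinearMap.ker_ne_bot_of_finrank_lt hcard)
  have hTw : ‖T w‖ ≤ T.singularValues k * ‖(w : E)‖ :=
    T.norm_apply_le_singularValues_mul_norm fun i hi ↦ by
      simpa [coords] using congr_fun (LinearMap.mem_ker.mp hw : coords w = 0) ⟨i, hi⟩
  have hw_pos : 0 < ‖(w : E)‖ := norm_pos_iff.mpr (by simpa using hw0)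
  exact le_of_mul_le_mul_right ((hs w w.2).trans hTw) hw_pos

theorem exists_finrank_eq_forall_singularValues_mul_norm_le {k : ℕ} (hk : k < finrank 𝕜 E) :
    ∃ V : Submodule 𝕜 E, finrank 𝕜 V = k + 1 ∧
      ∀ v ∈ V, T.singularValues k * ‖v‖ ≤ ‖T v‖ := by
  let b := T.rightSingularVectors
  let top : Finset.Iic (⟨k, hk⟩ : Fin (finrank 𝕜 E)) → E := fun i ↦ b i
  refine ⟨Submodule.span 𝕜 (Set.range top), ?_,
    fun v hv ↦ T.singularValues_mul_norm_le_norm_apply fun j hj ↦ ?_⟩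
  · have hon : Orthonormal 𝕜 top := b.orthonormal.comp _ Subtype.val_injective
    rw [finrank_span_eq_card hon.linearIndependent, Fintype.card_coe, Fin.card_Iic]
  · have hspan : Submodule.span 𝕜 (Set.range top) ≤ (𝕜 ∙ b j)ᗮ := by
      refine Submodule.span_le.mpr <| Set.range_subset_iff.mpr fun i ↦ ?_
      refine Submodule.mem_orthogonal_singleton_iff_inner_right.mpr (b.inner_eq_zero ?_)
      have : (i.1 : ℕ) ≤ k := Fin.le_def.mp (Finset.mem_Iic.mp i.2)
      exact fun h ↦ by omega
    exact Submodule.mem_orthogonal_singleton_iff_inner_right.mp (hspan hv)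

-- `φ` maps the span of the top `k + 1` right singular vectors of `X` injectively onto a
-- subspace on which `‖Y w‖ ≥ sₖ(X) ‖w‖`.
theorem singularValues_le_of_norm_apply_mul_norm_le {E' F' : Type*}
    [NormedAddCommGroup E'] [InnerProductSpace 𝕜 E'] [FiniteDimensional 𝕜 E']
    [NormedAddCommGroup F'] [InnerProductSpace 𝕜 F'] [FiniteDimensional 𝕜 F']
    {X : E →ₗ[𝕜] F} {Y : E' →ₗ[𝕜] F'} (φ : E →ₗ[𝕜] E') (hker : ∀ v, φ v = 0 → X v = 0)
    (hXY : ∀ v, ‖X v‖ * ‖φ v‖ ≤ ‖v‖ * ‖Y (φ v)‖) (k : ℕ) :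
    X.singularValues k ≤ Y.singularValues k := by
  rcases le_or_gt (finrank 𝕜 E) k with hk | hk
  · rw [X.singularValues_of_finrank_le hk]
    exact Y.singularValues_nonneg k
  obtain ⟨V, hV_dim, hV⟩ := X.exists_finrank_eq_forall_singularValues_mul_norm_le hk
  rcases (X.singularValues_nonneg k).eq_or_lt with hs | hs
  · rw [← hs]
    exact Y.singularValues_nonneg k
  have hinj : Function.Injective (φ.domRestrict V) := by
    refine (injective_iff_map_eq_zero _).mpr fun v hv ↦ Subtype.ext ?_
    have := hV v v.2
    rw [hker v hv, norm_zero] at this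
    exact norm_le_zero_iff.mp (nonpos_of_mul_nonpos_right this hs)
  refine Y.le_singularValues_of_forall_mul_norm_le (V := V.map φ) ?_ fun w hw ↦ ?_
  · rw [← range_domRestrict, finrank_range_of_inj hinj, hV_dim]
    exact k.lt_succ_self
  obtain ⟨v, hv, rfl⟩ := Submodule.mem_map.mp hw
  rcases (norm_nonneg v).eq_or_lt with hv0 | hv0
  · rw [norm_eq_zero.mp hv0.symm, map_zero, norm_zero, mul_zero]
    exact norm_nonneg _
  refine le_of_mul_le_mul_left ?_ hv0
  calc ‖v‖ * (X.singularValues k * ‖φ v‖) = X.singularValues k * ‖v‖ * ‖φ v‖ := by ring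
    _ ≤ ‖X v‖ * ‖φ v‖ := mul_le_mul_of_nonneg_right (hV v hv) (norm_nonneg _)
    _ ≤ ‖v‖ * ‖Y (φ v)‖ := hXY v

theorem singularValues_comp_le_of_norm_mul_norm_le {A B P : E →ₗ[𝕜] E} (hP : P.IsSymmetric)
    (hPP : IsIdempotentElem P) (hB : B.IsSymmetric)
    (hAB : ∀ u, ‖A u‖ * ‖B u‖ ≤ ‖A (B u)‖ * ‖u‖) (k : ℕ) :
    (A ∘ₗ P ∘ₗ B).singularValues k ≤ (A ∘ₗ B ∘ₗ P).singularValues k := by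
  refine singularValues_le_of_norm_apply_mul_norm_le (P ∘ₗ B) (fun v hv ↦ ?_) (fun v ↦ ?_) k
  · rw [comp_apply, hv, map_zero]
  have hPu : P (P (B v)) = P (B v) := by rw [← Module.End.mul_apply, hPP.eq]
  have hu_sq := hP.norm_sq_apply_le hPP hB v
  simp only [comp_apply, hPu] at hu_sq ⊢
  set u := P (B v)
  rcases (norm_nonneg u).eq_or_lt with hu | hu
  · rw [← hu, mul_zero]
    positivity
  refine le_of_mul_le_mul_right ?_ hu
  calc ‖A u‖ * ‖u‖ * ‖u‖ = ‖A u‖ * ‖u‖ ^ 2 := by ring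
    _ ≤ ‖A u‖ * (‖v‖ * ‖B u‖) := mul_le_mul_of_nonneg_left hu_sq (norm_nonneg _)
    _ = ‖v‖ * (‖A u‖ * ‖B u‖) := by ring
    _ ≤ ‖v‖ * (‖A (B u)‖ * ‖u‖) := mul_le_mul_of_nonneg_left (hAB u) (norm_nonneg _)
    _ = ‖v‖ * ‖A (B u)‖ * ‖u‖ := by ring

end LinearMap

namespace Matrix

variable {m n 𝕜 : Type*} [Fintype m] [DecidableEq m] [Fintype n] [DecidableEq n] [RCLike 𝕜]

theorem IsHermitian.toEuclideanLin_cfc_eigenvectorBasis {C : Matrix n n 𝕜} (hC : C.IsHermitian)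
    (f : ℝ → ℝ) (j : n) :
    toEuclideanLin (cfc f C) (hC.eigenvectorBasis j) =
      (f (hC.eigenvalues j) : 𝕜) • hC.eigenvectorBasis j := by
  have hsingle : diagonal (RCLike.ofReal ∘ f ∘ hC.eigenvalues) *ᵥ Pi.single j (1 : 𝕜) =
      (f (hC.eigenvalues j) : 𝕜) • Pi.single j 1 := by
    rw [diagonal_mulVec_single, mul_one, ← Pi.single_smul', smul_eq_mul, mul_one]
    rfl
  rw [hC.cfc_eq, IsHermitian.cfc, Unitary.conjStarAlgAut_apply, toLpLin_apply,
    ← mulVec_mulVec, ← mulVec_mulVec, star_eigenvectorUnitary_mulVec, hsingle, mulVec_smul,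
    eigenvectorUnitary_mulVec]
  rfl

theorem sqrt_eigenvalues_conjTranspose_mul_self (X : Matrix m n 𝕜) (i : n) :
    √((isHermitian_conjTranspose_mul_self X).eigenvalues i) =
      (toEuclideanLin X).singularValues
        ((Fintype.equivOfCardEq (Fintype.card_fin _)).symm i : Fin (Fintype.card n)) := by
  have hT : toEuclideanLin (Xᴴ * X) =
      LinearMap.adjoint (toEuclideanLin X) ∘ₗ toEuclideanLin X := by
    rw [toLpLin_mul_same, toEuclideanLin_conjTranspose_eq_adjoint]
  -- `rw [hT]` alone is blocked by the symmetry proof that `eigenvalues` depends on.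
  have heig : ∀ {S S' : EuclideanSpace 𝕜 n →ₗ[𝕜] EuclideanSpace 𝕜 n} (_ : S = S')
      (hS : S.IsSymmetric) (hS' : S'.IsSymmetric),
      hS.eigenvalues finrank_euclideanSpace = hS'.eigenvalues finrank_euclideanSpace := by
    rintro _ _ rfl _ _
    rfl
  rw [LinearMap.singularValues_fin (toEuclideanLin X) (finrank_euclideanSpace (𝕜 := 𝕜) (ι := n)),
    IsHermitian.eigenvalues, IsHermitian.eigenvalues₀, heig hT]

theorem IsHermitian.exists_unitary_posSemidef_sub_cfc {P Q : Matrix n n 𝕜} (hP : P.IsHermitian)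
    (hQ : Q.IsHermitian) {f : ℝ → ℝ} (h : ∀ i, f (hP.eigenvalues i) ≤ f (hQ.eigenvalues i)) :
    ∃ V ∈ unitaryGroup n 𝕜, (V * cfc f Q * star V - cfc f P).PosSemidef := by
  let V : unitaryGroup n 𝕜 := hP.eigenvectorUnitary * star hQ.eigenvectorUnitary
  refine ⟨V, V.2, ?_⟩
  have hVQ : (V : Matrix n n 𝕜) * cfc f Q * star (V : Matrix n n 𝕜) =
      Unitary.conjStarAlgAut 𝕜 _ hP.eigenvectorUnitary
        (diagonal (RCLike.ofReal ∘ f ∘ hQ.eigenvalues)) := by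
    rw [hQ.cfc_eq, IsHermitian.cfc, ← Unitary.conjStarAlgAut_apply (S := 𝕜) V,
      ← Unitary.conjStarAlgAut_mul_apply]
    simp only [V, mul_assoc, Unitary.star_mul_self, mul_one]
  rw [hVQ, hP.cfc_eq, IsHermitian.cfc, ← map_sub, Unitary.conjStarAlgAut_apply]
  refine PosSemidef.mul_mul_conjTranspose_same ?_ _
  rw [diagonal_sub, posSemidef_diagonal_iff]
  intro i
  simpa using h i

end Matrix

section

open Matrix

theorem MonotonePair.norm_mul_norm_le {n : ℕ} {A B : Matrix (Fin n) (Fin n) ℂ}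
    (hAB : MonotonePair A B) (u : EuclideanSpace ℂ (Fin n)) :
    ‖toEuclideanLin A u‖ * ‖toEuclideanLin B u‖ ≤
      ‖toEuclideanLin A (toEuclideanLin B u)‖ * ‖u‖ := by
  obtain ⟨C, f, g, hC, hf, hg, hf0, hg0, rfl, rfl⟩ := hAB
  set b := hC.1.eigenvectorBasis
  set μ := hC.1.eigenvalues
  have hμ : ∀ i, μ i ∈ Set.Ici 0 := hC.eigenvalues_nonneg
  have hA := b.norm_sq_apply_eq_sum (hC.1.toEuclideanLin_cfc_eigenvectorBasis f) u
  have hB := b.norm_sq_apply_eq_sum (hC.1.toEuclideanLin_cfc_eigenvectorBasis g) u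
  have hAB := b.norm_sq_apply_eq_sum (M := toEuclideanLin (cfc f C) ∘ₗ toEuclideanLin (cfc g C))
    (fun i ↦ by
      rw [LinearMap.comp_apply, hC.1.toEuclideanLin_cfc_eigenvectorBasis, map_smul,
        hC.1.toEuclideanLin_cfc_eigenvectorBasis, smul_smul, mul_comm]) u
  have hmono : Monovary (fun i ↦ f (μ i) ^ 2) (fun i ↦ g (μ i) ^ 2) := fun i j hij ↦ by
    have hμij : μ i < μ j := lt_of_not_ge fun hji ↦
      hij.not_ge (pow_le_pow_left₀ (hg0 _ (hμ j)) (hg (hμ j) (hμ i) hji) 2)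
    exact pow_le_pow_left₀ (hf0 _ (hμ i)) (hf (hμ i) (hμ j) hμij.le) 2
  have cheb := hmono.sum_mul_sum_le_sum_mul_sum (w := fun i ↦ ‖⟪b i, u⟫_ℂ‖ ^ 2)
    (fun i ↦ by positivity)
  refine (pow_le_pow_iff_left₀ (by positivity) (by positivity) two_ne_zero).mp ?_
  rw [LinearMap.comp_apply] at hAB
  rw [mul_pow, mul_pow, hA, hB, hAB, ← b.sum_sq_norm_inner_right u]
  simpa only [norm_mul, mul_pow, RCLike.norm_ofReal, sq_abs] using cheb

-- `IsHermitian.eigenvalues` reindexes the sorted `eigenvalues₀` along one fixed equivalence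
-- `Fin (card n) ≃ n`, so equal indices of `|X|` and `|Y|` carry the same rank `k`.
theorem exists_unitary_loewnerLE_matAbs_of_singularValues_le {n : ℕ}
    {X Y : Matrix (Fin n) (Fin n) ℂ}
    (h : ∀ k, (toEuclideanLin X).singularValues k ≤ (toEuclideanLin Y).singularValues k) :
    ∃ V : Matrix (Fin n) (Fin n) ℂ, V ∈ unitaryGroup (Fin n) ℂ ∧
      loewnerLE (matAbs X) (V * matAbs Y * Vᴴ) :=
  (isHermitian_conjTranspose_mul_self X).exists_unitary_posSemidef_sub_cfc
    (isHermitian_conjTranspose_mul_self Y) (f := Real.sqrt) fun i ↦ by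
      simp only [sqrt_eigenvalues_conjTranspose_mul_self]
      exact h _

end

theorem monotone_pair_projection_general {n : ℕ} (A B E : Matrix (Fin n) (Fin n) ℂ)
    (hB : B.PosSemidef) (hAB : MonotonePair A B)
    (hE : Eᴴ = E) (hE2 : E * E = E) :
    ∃ V : Matrix (Fin n) (Fin n) ℂ, V ∈ Matrix.unitaryGroup (Fin n) ℂ ∧
      loewnerLE (matAbs (A * E * B)) (V * matAbs (A * B * E) * Vᴴ) := by
  refine exists_unitary_loewnerLE_matAbs_of_singularValues_le fun k ↦ ?_
  have hE_symm : E.toEuclideanLin.IsSymmetric := Matrix.isSymmetric_toEuclideanLin_iff.mpr hE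
  have hE_idem : IsIdempotentElem E.toEuclideanLin := by
    rw [IsIdempotentElem, Module.End.mul_eq_comp, ← Matrix.toLpLin_mul_same, hE2]
  have hB_symm : B.toEuclideanLin.IsSymmetric := Matrix.isSymmetric_toEuclideanLin_iff.mpr hB.1
  simpa only [Matrix.toLpLin_mul_same, LinearMap.comp_assoc] using
    LinearMap.singularValues_comp_le_of_norm_mul_norm_le hE_symm hE_idem hB_symm
      hAB.norm_mul_norm_le k

/-- For a monotone pair `(A, B)` of positive semidefinite matrices and a self-adjoint
projection `E`, there is a unitary `V` with `|AEB| ≤ V |ABE| V*`. -/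
theorem monotone_pair_projection {n : ℕ} (A B E : Matrix (Fin n) (Fin n) ℂ)
    (hA : A.PosSemidef) (hB : B.PosSemidef) (hAB : MonotonePair A B)
    (hE : Eᴴ = E) (hE2 : E * E = E) :
    ∃ V : Matrix (Fin n) (Fin n) ℂ, V ∈ Matrix.unitaryGroup (Fin n) ℂ ∧
      loewnerLE (matAbs (A * E * B)) (V * matAbs (A * B * E) * Vᴴ) :=
  monotone_pair_projection_general A B E hB hAB hE hE2
end

section
/- Let (A,B) be a monotone pair in Mₙ(ℂ) and let Φ : Mₙ(ℂ) → M_d(ℂ) be a unital positive linear map. Then there exists a unitary V ∈ M_d(ℂ) such that Φ(A)Φ(B)Φ(A) ≤ V Φ(ABA) V*. -/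
open scoped Matrix ComplexOrder

/-!
Put `X = Φ(A)`, `P = X Φ(B) X` and `Q = Φ(ABA)`. A unitary `V` with `P ≤ V Q V*` exists as soon
as, for every `r > 0`, `P` has at most as many eigenvalues `≥ r` as `Q`: Hall's theorem then
matches every eigenvalue of `P` with a larger one of `Q`, and the two eigenbases give `V`. By
min–max it suffices that `w = X u` satisfies `r‖w‖² ≤ ⟨w, Q w⟩` whenever `r‖u‖² ≤ ⟨u, P u⟩`
(on such `u`, `X` is injective, since `⟨u, P u⟩ = ⟨Xu, Φ(B) Xu⟩`).

Diagonalising `C`, the numbers `⟨w, Φ(Eᵢ) w⟩` for the eigenprojections `Eᵢ` of `C` are nonnegative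
weights of total mass `‖w‖²`, against which `A`, `B`, `ABA` become the similarly ordered sequences
`Fᵢ`, `Gᵢ`, `Fᵢ² Gᵢ`. Cauchy–Schwarz and Chebyshev's sum inequality for these weights give
`⟨w, X w⟩² ⟨w, Φ(B) w⟩ ≤ ‖w‖⁴ ⟨w, Q w⟩`, and the moment inequality
`‖Xu‖⁶ ≤ ⟨u, X³ u⟩² ‖u‖²` for `X ≥ 0` closes the chain.
-/

open Finset Module

section Chebyshev

variable {ι : Type*} [Fintype ι]

theorem Monovary.sum_mul_sum_le_sum_mul_sum_s8 {p a b : ι → ℝ} (hab : Monovary a b)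
    (hp : ∀ i, 0 ≤ p i) :
    (∑ i, a i * p i) * (∑ i, b i * p i) ≤ (∑ i, p i) * ∑ i, a i * b i * p i := by
  have key : 0 ≤ ∑ i, ∑ j, (a j - a i) * (b j - b i) * (p i * p j) :=
    sum_nonneg fun i _ => sum_nonneg fun j _ =>
      mul_nonneg (hab.sub_mul_sub_nonneg i j) (mul_nonneg (hp i) (hp j))
  have expand : ∑ i, ∑ j, (a j - a i) * (b j - b i) * (p i * p j) =
      2 * ((∑ i, p i) * ∑ i, a i * b i * p i - (∑ i, a i * p i) * (∑ i, b i * p i)) := by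
    have term : ∀ i j, (a j - a i) * (b j - b i) * (p i * p j) =
        p i * (a j * b j * p j) + a i * b i * p i * p j
          - (b i * p i * (a j * p j) + a i * p i * (b j * p j)) := fun i j => by ring
    simp only [term, sum_sub_distrib, sum_add_distrib, ← mul_sum, ← sum_mul]
    ring
  linarith

theorem sum_sq_mul_pow_three_le {ν x : ι → ℝ} (hν : ∀ i, 0 ≤ ν i) (hx : ∀ i, 0 ≤ x i) :
    (∑ i, x i ^ 2 * ν i) ^ 3 ≤ (∑ i, x i ^ 3 * ν i) ^ 2 * ∑ i, ν i := by
  have h₁ : (∑ i, x i ^ 2 * ν i) ^ 2 ≤ (∑ i, x i * ν i) * ∑ i, x i ^ 3 * ν i := by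
    have := (monovary_self x).sum_mul_sum_le_sum_mul_sum_s8 fun i => mul_nonneg (hx i) (hν i)
    have shift : ∀ k : ℕ, ∑ i, x i ^ (k + 1) * ν i = ∑ i, x i ^ k * (x i * ν i) := fun k =>
      sum_congr rfl fun i _ => by ring
    rw [sq, shift 1, shift 2]
    simpa only [pow_one, pow_two] using this
  have h₂ : (∑ i, x i * ν i) * ∑ i, x i ^ 2 * ν i ≤ (∑ i, ν i) * ∑ i, x i ^ 3 * ν i := by
    have hmono : Monovary x fun i => x i ^ 2 := fun i j h =>
      ((pow_lt_pow_iff_left₀ (hx i) (hx j) two_ne_zero).1 h).le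
    convert hmono.sum_mul_sum_le_sum_mul_sum_s8 hν using 3 with i
    ring
  have hS₂ : 0 ≤ ∑ i, x i ^ 2 * ν i := sum_nonneg fun i _ => mul_nonneg (sq_nonneg _) (hν i)
  have hS₃ : 0 ≤ ∑ i, x i ^ 3 * ν i :=
    sum_nonneg fun i _ => mul_nonneg (pow_nonneg (hx i) 3) (hν i)
  calc (∑ i, x i ^ 2 * ν i) ^ 3 = (∑ i, x i ^ 2 * ν i) ^ 2 * ∑ i, x i ^ 2 * ν i := by ring
    _ ≤ (∑ i, x i * ν i) * (∑ i, x i ^ 3 * ν i) * ∑ i, x i ^ 2 * ν i := by gcongr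
    _ = (∑ i, x i ^ 3 * ν i) * ((∑ i, x i * ν i) * ∑ i, x i ^ 2 * ν i) := by ring
    _ ≤ (∑ i, x i ^ 3 * ν i) * ((∑ i, ν i) * ∑ i, x i ^ 3 * ν i) := by gcongr
    _ = (∑ i, x i ^ 3 * ν i) ^ 2 * ∑ i, ν i := by ring

theorem sq_sum_mul_sum_le {q F G : ι → ℝ} (hq : ∀ i, 0 ≤ q i) (hF : ∀ i, 0 ≤ F i)
    (hG : ∀ i, 0 ≤ G i) (hFG : Monovary F G) :
    (∑ i, F i * q i) ^ 2 * ∑ i, G i * q i ≤ (∑ i, q i) ^ 2 * ∑ i, F i * G i * F i * q i := by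
  have hCS : (∑ i, F i * q i) ^ 2 ≤ (∑ i, q i) * ∑ i, F i * F i * q i := by
    rw [sq]; exact (monovary_self F).sum_mul_sum_le_sum_mul_sum_s8 hq
  have hFFG : Monovary (fun i => F i * F i) G := fun i j h =>
    mul_self_le_mul_self (hF i) (hFG h)
  have hCheb := hFFG.sum_mul_sum_le_sum_mul_sum_s8 hq
  have hGq : 0 ≤ ∑ i, G i * q i := sum_nonneg fun i _ => mul_nonneg (hG i) (hq i)
  have hq₀ : 0 ≤ ∑ i, q i := sum_nonneg fun i _ => hq i
  calc (∑ i, F i * q i) ^ 2 * ∑ i, G i * q i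
      ≤ (∑ i, q i) * (∑ i, F i * F i * q i) * ∑ i, G i * q i := by gcongr
    _ = (∑ i, q i) * ((∑ i, F i * F i * q i) * ∑ i, G i * q i) := by ring
    _ ≤ (∑ i, q i) * ((∑ i, q i) * ∑ i, F i * F i * G i * q i) := by gcongr
    _ = (∑ i, q i) ^ 2 * ∑ i, F i * G i * F i * q i := by
      rw [sq, mul_assoc]; congr 2; exact sum_congr rfl fun i _ => by ring

end Chebyshev

theorem mul_le_of_pow_three_le_of_sq_mul_le {r S a b m s : ℝ} (hr : 0 ≤ r) (hm : 0 ≤ m)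
    (hs : 0 ≤ s) (hmom : m ^ 3 ≤ a ^ 2 * S) (hcheb : a ^ 2 * b ≤ m ^ 2 * s) (hb : r * S ≤ b) :
    r * m ≤ s := by
  rcases hm.eq_or_lt with rfl | hm
  · simpa using hs
  refine le_of_mul_le_mul_right ?_ (pow_pos hm 2)
  calc r * m * m ^ 2 = r * m ^ 3 := by ring
    _ ≤ r * (a ^ 2 * S) := by gcongr
    _ = a ^ 2 * (r * S) := by ring
    _ ≤ a ^ 2 * b := by gcongr
    _ ≤ s * m ^ 2 := by linarith

-- Hall's marriage theorem for the relation `p i ≤ q j`.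
theorem exists_perm_le_of_card_le {n : Type*} [Fintype n] {p q : n → ℝ} (hq : ∀ i, 0 ≤ q i)
    (hcount : ∀ r, 0 < r → #{i | r ≤ p i} ≤ #{i | r ≤ q i}) :
    ∃ σ : Equiv.Perm n, ∀ i, p i ≤ q (σ i) := by
  classical
  have hall : ∀ s : Finset n, #s ≤ #{j | ∃ i ∈ s, p i ≤ q j} := by
    intro s
    rcases s.eq_empty_or_nonempty with rfl | hs
    · simp
    have hnbr : ({j | ∃ i ∈ s, p i ≤ q j} : Finset n) = ({j | s.inf' hs p ≤ q j} : Finset n) := by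
      ext j; simp [inf'_le_iff]
    have hsub : s ⊆ ({i | s.inf' hs p ≤ p i} : Finset n) := fun i hi =>
      mem_filter.2 ⟨mem_univ i, inf'_le p hi⟩
    rw [hnbr]
    by_cases hr : 0 < s.inf' hs p
    · exact (card_le_card hsub).trans (hcount _ hr)
    · rw [filter_true_of_mem fun j _ => (not_lt.1 hr).trans (hq j)]
      exact card_le_univ s
  obtain ⟨f, hf, hpf⟩ := (Fintype.all_card_le_filter_rel_iff_exists_injective _).1 hall
  exact ⟨Equiv.ofBijective f hf.bijective_of_finite, hpf⟩

namespace Matrix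

section QuadForm

variable {m n ι : Type*} [Fintype m] [Fintype n]

noncomputable def quadForm (M : Matrix n n ℂ) (w : n → ℂ) : ℝ := (star w ⬝ᵥ (M *ᵥ w)).re

theorem quadForm_mulVec (M : Matrix n n ℂ) (L : Matrix n m ℂ) (u : m → ℂ) :
    quadForm M (L *ᵥ u) = quadForm (Lᴴ * M * L) u := by
  rw [quadForm, quadForm, star_mulVec, ← dotProduct_mulVec, mulVec_mulVec, mulVec_mulVec,
    Matrix.mul_assoc]

theorem quadForm_sum_smul (s : Finset ι) (c : ι → ℝ) (M : ι → Matrix n n ℂ) (w : n → ℂ) :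
    quadForm (∑ i ∈ s, (c i : ℂ) • M i) w = ∑ i ∈ s, c i * quadForm (M i) w := by
  simp [quadForm, sum_mulVec, dotProduct_sum, smul_mulVec]

theorem PosSemidef.quadForm_nonneg {M : Matrix n n ℂ} (hM : M.PosSemidef) (w : n → ℂ) :
    0 ≤ quadForm M w :=
  hM.re_dotProduct_nonneg w

variable [DecidableEq n]

theorem quadForm_diagonal (μ : n → ℝ) (c : n → ℂ) :
    quadForm (diagonal fun i => (μ i : ℂ)) c = ∑ i, μ i * Complex.normSq (c i) := by
  simp only [quadForm, mulVec_diagonal, dotProduct, Pi.star_apply, Complex.re_sum]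
  refine sum_congr rfl fun i _ => ?_
  rw [mul_left_comm, Complex.star_def, ← Complex.normSq_eq_conj_mul_self, Complex.re_ofReal_mul,
    Complex.ofReal_re]

theorem quadForm_one (c : n → ℂ) : quadForm 1 c = ∑ i, Complex.normSq (c i) := by
  simpa using quadForm_diagonal (fun _ => 1) c

theorem quadForm_one_pos {c : n → ℂ} (hc : c ≠ 0) : 0 < quadForm 1 c := by
  obtain ⟨i, hi⟩ := Function.ne_iff.1 hc
  rw [quadForm_one]
  exact sum_pos' (fun j _ => Complex.normSq_nonneg _) ⟨i, mem_univ i, Complex.normSq_pos.2 hi⟩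

end QuadForm

section Unitary

variable {n α : Type*} [Fintype n]

theorem conjTranspose_submatrix_mul_mul_submatrix [CommSemiring α] [StarRing α]
    (U M : Matrix n n α) (σ : Equiv.Perm n) :
    (U.submatrix id σ)ᴴ * M * U.submatrix id σ = (Uᴴ * M * U).submatrix σ σ := by
  rw [submatrix_mul _ _ _ id _ Function.bijective_id,
    submatrix_mul _ _ _ id _ Function.bijective_id, submatrix_id_id, conjTranspose_submatrix]

variable [DecidableEq n]

theorem submatrix_mem_unitaryGroup [CommRing α] [StarRing α] {U : Matrix n n α}
    (hU : U ∈ unitaryGroup n α) (σ : Equiv.Perm n) : U.submatrix id σ ∈ unitaryGroup n α := by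
  rw [mem_unitaryGroup_iff', star_eq_conjTranspose, ← Matrix.mul_one (_ᴴ),
    conjTranspose_submatrix_mul_mul_submatrix, Matrix.mul_one, ← star_eq_conjTranspose,
    mem_unitaryGroup_iff'.1 hU, submatrix_one_equiv]

theorem UnitaryGroup.finrank_map_spanSubset (U : unitaryGroup n ℂ) (s : Set n) :
    finrank ℂ ((Pi.spanSubset ℂ s).map (mulVecLin (U : Matrix n n ℂ))) = s.ncard := by
  have : mulVecLin (U : Matrix n n ℂ) = (UnitaryGroup.toLinearEquiv U : (n → ℂ) →ₗ[ℂ] n → ℂ) :=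
    rfl
  rw [this, LinearEquiv.finrank_map_eq, Pi.dim_spanSubset]

end Unitary

namespace IsHermitian

variable {n : Type*} [Fintype n] [DecidableEq n] {A : Matrix n n ℂ}

theorem cfc_eq_conj_diagonal (hA : A.IsHermitian) (f : ℝ → ℝ) :
    cfc f A = (hA.eigenvectorUnitary : Matrix n n ℂ) *
      diagonal (fun i => (f (hA.eigenvalues i) : ℂ)) * (hA.eigenvectorUnitary : Matrix n n ℂ)ᴴ := by
  rw [hA.cfc_eq, IsHermitian.cfc, Unitary.conjStarAlgAut_apply]
  rfl

theorem conjTranspose_eigenvectorUnitary_mul_mul (hA : A.IsHermitian) :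
    (hA.eigenvectorUnitary : Matrix n n ℂ)ᴴ * A * hA.eigenvectorUnitary =
      diagonal fun i => (hA.eigenvalues i : ℂ) := by
  rw [← star_eq_conjTranspose]
  simpa [Function.comp_def] using hA.conjStarAlgAut_star_eigenvectorUnitary

theorem posSemidef_cfc (hA : A.IsHermitian) {f : ℝ → ℝ} (hf : ∀ i, 0 ≤ f (hA.eigenvalues i)) :
    (cfc f A).PosSemidef := by
  rw [hA.cfc_eq_conj_diagonal]
  exact (posSemidef_diagonal_iff.2 fun i =>
    Complex.zero_le_real.2 (hf i)).mul_mul_conjTranspose_same _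

theorem quadForm_cfc_mulVec (hA : A.IsHermitian) (f : ℝ → ℝ) (c : n → ℂ) :
    quadForm (cfc f A) ((hA.eigenvectorUnitary : Matrix n n ℂ) *ᵥ c) =
      ∑ i, f (hA.eigenvalues i) * Complex.normSq (c i) := by
  have hU := Unitary.coe_star_mul_self hA.eigenvectorUnitary
  rw [cfc_eq_conj_diagonal hA, quadForm_mulVec, ← star_eq_conjTranspose]
  simp only [← Matrix.mul_assoc, hU, Matrix.one_mul]
  rw [Matrix.mul_assoc, hU, Matrix.mul_one, quadForm_diagonal]

theorem quadForm_mulVec_eigenvectorUnitary (hA : A.IsHermitian) (c : n → ℂ) :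
    quadForm A ((hA.eigenvectorUnitary : Matrix n n ℂ) *ᵥ c) =
      ∑ i, hA.eigenvalues i * Complex.normSq (c i) := by
  simpa [cfc_id' ℝ A] using hA.quadForm_cfc_mulVec (fun x => x) c

theorem quadForm_one_mulVec_eigenvectorUnitary (hA : A.IsHermitian) (c : n → ℂ) :
    quadForm 1 ((hA.eigenvectorUnitary : Matrix n n ℂ) *ᵥ c) = ∑ i, Complex.normSq (c i) := by
  simpa [cfc_const_one ℝ A] using hA.quadForm_cfc_mulVec (fun _ => 1) c

noncomputable def eigenvectorProj (hA : A.IsHermitian) (i : n) : Matrix n n ℂ :=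
  (hA.eigenvectorUnitary : Matrix n n ℂ) * single i i 1 * (hA.eigenvectorUnitary : Matrix n n ℂ)ᴴ

theorem eigenvectorProj_posSemidef (hA : A.IsHermitian) (i : n) :
    (hA.eigenvectorProj i).PosSemidef := by
  refine PosSemidef.mul_mul_conjTranspose_same ?_ _
  rw [← diagonal_single]
  exact posSemidef_diagonal_iff.2 fun j => by
    rcases eq_or_ne j i with rfl | h <;> simp [*]

theorem cfc_eq_sum_smul_eigenvectorProj (hA : A.IsHermitian) (f : ℝ → ℝ) :
    cfc f A = ∑ i, (f (hA.eigenvalues i) : ℂ) • hA.eigenvectorProj i := by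
  have hdiag : diagonal (fun i => (f (hA.eigenvalues i) : ℂ)) =
      ∑ i, (f (hA.eigenvalues i) : ℂ) • single i i 1 := by
    ext j k
    rcases eq_or_ne j k with rfl | h
    · simp [Matrix.sum_apply, single_apply]
    · simp only [diagonal_apply_ne _ h, Matrix.sum_apply, smul_apply, single_apply]
      refine (sum_eq_zero fun i _ => ?_).symm
      rw [if_neg fun hi => h (hi.1.symm.trans hi.2), smul_zero]
  simp only [cfc_eq_conj_diagonal hA, hdiag, eigenvectorProj, Matrix.mul_sum, Matrix.sum_mul,
    Matrix.mul_smul, Matrix.smul_mul]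

theorem exists_finrank_eq_card_quadForm_ge (hA : A.IsHermitian) (r : ℝ) :
    ∃ E : Submodule ℂ (n → ℂ), finrank ℂ E = #{i | r ≤ hA.eigenvalues i} ∧
      ∀ u ∈ E, r * quadForm 1 u ≤ quadForm A u := by
  refine ⟨(Pi.spanSubset ℂ {i | r ≤ hA.eigenvalues i}).map
    (mulVecLin (hA.eigenvectorUnitary : Matrix n n ℂ)), ?_, ?_⟩
  · rw [UnitaryGroup.finrank_map_spanSubset, Set.ncard_eq_toFinset_card', Set.toFinset_ofPred]
  · rintro _ ⟨c, hc, rfl⟩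
    rw [mulVecLin_apply, quadForm_mulVec_eigenvectorUnitary,
      quadForm_one_mulVec_eigenvectorUnitary, mul_sum]
    refine sum_le_sum fun i _ => ?_
    by_cases hi : r ≤ hA.eigenvalues i
    · exact mul_le_mul_of_nonneg_right hi (Complex.normSq_nonneg _)
    · simp [Pi.mem_spanSubset_iff.1 hc i hi]

theorem finrank_le_card_of_quadForm_ge (hA : A.IsHermitian) {r : ℝ} (W : Submodule ℂ (n → ℂ))
    (hW : ∀ w ∈ W, r * quadForm 1 w ≤ quadForm A w) :
    finrank ℂ W ≤ #{i | r ≤ hA.eigenvalues i} := by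
  set Z := (Pi.spanSubset ℂ {i | hA.eigenvalues i < r}).map
    (mulVecLin (hA.eigenvectorUnitary : Matrix n n ℂ))
  have hZ : ∀ z ∈ Z, z ≠ 0 → quadForm A z < r * quadForm 1 z := by
    rintro _ ⟨c, hc, rfl⟩ hz
    obtain ⟨i, hi⟩ := Function.ne_iff.1 (fun h => hz (by simp [h]) : c ≠ 0)
    have hri : hA.eigenvalues i < r := by
      by_contra h; exact hi (Pi.mem_spanSubset_iff.1 hc i h)
    rw [mulVecLin_apply, quadForm_mulVec_eigenvectorUnitary,
      quadForm_one_mulVec_eigenvectorUnitary, mul_sum]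
    refine sum_lt_sum (fun j _ => ?_) ⟨i, mem_univ i, ?_⟩
    · by_cases hj : hA.eigenvalues j < r
      · exact mul_le_mul_of_nonneg_right hj.le (Complex.normSq_nonneg _)
      · simp [Pi.mem_spanSubset_iff.1 hc j hj]
    · exact mul_lt_mul_of_pos_right hri (Complex.normSq_pos.2 hi)
  have hdisj : Disjoint W Z := by
    refine Submodule.disjoint_def.2 fun x hxW hxZ => ?_
    by_contra hx
    exact (hW x hxW).not_gt (hZ x hxZ hx)
  have hdim := Submodule.finrank_add_finrank_le_of_disjoint hdisj
  have hcard := card_filter_add_card_filter_not (s := univ) (fun i => r ≤ hA.eigenvalues i)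
  simp only [Z, UnitaryGroup.finrank_map_spanSubset, finrank_fintype_fun_eq_card,
    Set.ncard_eq_toFinset_card', Set.toFinset_ofPred, not_le, card_univ] at hdim hcard
  omega

end IsHermitian

variable {n : Type*} [Fintype n] [DecidableEq n]

theorem PosSemidef.quadForm_one_mulVec_pow_three_le {X : Matrix n n ℂ} (hX : X.PosSemidef)
    (u : n → ℂ) : quadForm 1 (X *ᵥ u) ^ 3 ≤ quadForm X (X *ᵥ u) ^ 2 * quadForm 1 u := by
  have hXX : X * X = cfc (· ^ 2 : ℝ → ℝ) X := by
    rw [← sq]; exact (cfc_pow_id (R := ℝ) X 2 hX.isHermitian).symm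
  have hXXX : X * X * X = cfc (· ^ 3 : ℝ → ℝ) X := by
    rw [← sq, ← pow_succ]; exact (cfc_pow_id (R := ℝ) X 3 hX.isHermitian).symm
  rw [quadForm_mulVec 1 X u, quadForm_mulVec X X u, hX.isHermitian.eq, Matrix.mul_one, hXXX, hXX]
  set U : Matrix n n ℂ := hX.isHermitian.eigenvectorUnitary.1
  obtain ⟨c, rfl⟩ : ∃ c, u = U *ᵥ c :=
    ⟨star U *ᵥ u, by rw [mulVec_mulVec, mem_unitaryGroup_iff.1 (SetLike.coe_mem _), one_mulVec]⟩
  rw [hX.isHermitian.quadForm_cfc_mulVec, hX.isHermitian.quadForm_cfc_mulVec,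
    hX.isHermitian.quadForm_one_mulVec_eigenvectorUnitary]
  exact sum_sq_mul_pow_three_le (fun i => Complex.normSq_nonneg _) hX.eigenvalues_nonneg

theorem exists_unitary_posSemidef_conj_sub_of_card_le {P Q : Matrix n n ℂ} (hP : P.IsHermitian)
    (hQ : Q.PosSemidef)
    (hcount : ∀ r, 0 < r → #{i | r ≤ hP.eigenvalues i} ≤ #{i | r ≤ hQ.isHermitian.eigenvalues i}) :
    ∃ V ∈ unitaryGroup n ℂ, (V * Q * Vᴴ - P).PosSemidef := by
  obtain ⟨σ, hσ⟩ := exists_perm_le_of_card_le hQ.eigenvalues_nonneg hcount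
  set UP : Matrix n n ℂ := hP.eigenvectorUnitary.1
  -- the eigenvectors of `Q`, reordered so that the `i`-th eigenvalue dominates that of `P`
  set W := (hQ.isHermitian.eigenvectorUnitary : Matrix n n ℂ).submatrix id σ
  have hW : W ∈ unitaryGroup n ℂ := submatrix_mem_unitaryGroup (SetLike.coe_mem _) σ
  have hQW : Wᴴ * Q * W = diagonal fun i => (hQ.isHermitian.eigenvalues (σ i) : ℂ) := by
    rw [conjTranspose_submatrix_mul_mul_submatrix,
      hQ.isHermitian.conjTranspose_eigenvectorUnitary_mul_mul, submatrix_diagonal_equiv]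
    rfl
  have hPU : P = UP * diagonal (fun i => (hP.eigenvalues i : ℂ)) * UPᴴ := by
    simpa [cfc_id' ℝ P] using hP.cfc_eq_conj_diagonal fun x => x
  refine ⟨UP * Wᴴ, Submonoid.mul_mem _ (SetLike.coe_mem _) (Unitary.star_mem hW), ?_⟩
  have hdiff : UP * Wᴴ * Q * (UP * Wᴴ)ᴴ - P =
      UP * diagonal (fun i => ((hQ.isHermitian.eigenvalues (σ i) - hP.eigenvalues i : ℝ) : ℂ)) *
        UPᴴ := by
    conv_lhs => rw [hPU]
    rw [conjTranspose_mul, conjTranspose_conjTranspose, show UP * Wᴴ * Q * (W * UPᴴ) =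
      UP * (Wᴴ * Q * W) * UPᴴ by simp only [Matrix.mul_assoc], hQW, ← Matrix.sub_mul,
      ← Matrix.mul_sub, diagonal_sub]
    push_cast
    rfl
  rw [hdiff]
  exact (posSemidef_diagonal_iff.2 fun i =>
    Complex.zero_le_real.2 (sub_nonneg.2 (hσ i))).mul_mul_conjTranspose_same _

theorem exists_unitary_posSemidef_conj_sub_of_transfer {P Q L : Matrix n n ℂ}
    (hP : P.IsHermitian) (hQ : Q.PosSemidef) (hker : ∀ u, L *ᵥ u = 0 → quadForm P u = 0)
    (htransfer : ∀ r, 0 < r → ∀ u, r * quadForm 1 u ≤ quadForm P u →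
      r * quadForm 1 (L *ᵥ u) ≤ quadForm Q (L *ᵥ u)) :
    ∃ V ∈ unitaryGroup n ℂ, (V * Q * Vᴴ - P).PosSemidef := by
  refine exists_unitary_posSemidef_conj_sub_of_card_le hP hQ fun r hr => ?_
  obtain ⟨E, hEdim, hE⟩ := hP.exists_finrank_eq_card_quadForm_ge r
  have hinj : Function.Injective ((mulVecLin L).domRestrict E) := by
    rw [← LinearMap.ker_eq_bot, LinearMap.ker_eq_bot']
    intro u hu
    have hLu : L *ᵥ u = 0 := by simpa using hu
    by_contra hu0
    have hPu := hE u u.2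
    rw [hker _ hLu] at hPu
    exact hPu.not_gt (mul_pos hr (quadForm_one_pos (by simpa using hu0)))
  rw [← hEdim, ← LinearMap.finrank_range_of_inj hinj, LinearMap.range_domRestrict]
  refine hQ.isHermitian.finrank_le_card_of_quadForm_ge _ ?_
  rintro _ ⟨u, hu, rfl⟩
  exact htransfer r hr u (hE u hu)

section PositiveMap

variable {m : Type*} [Fintype m] (Φ : Matrix n n ℂ →ₗ[ℂ] Matrix m m ℂ) {C : Matrix n n ℂ}

theorem quadForm_map_cfc (hC : C.IsHermitian) (f : ℝ → ℝ) (w : m → ℂ) :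
    quadForm (Φ (cfc f C)) w =
      ∑ i, f (hC.eigenvalues i) * quadForm (Φ (hC.eigenvectorProj i)) w := by
  simp only [hC.cfc_eq_sum_smul_eigenvectorProj, map_sum, map_smul, quadForm_sum_smul]

theorem sq_quadForm_map_cfc_mul_le [DecidableEq m] (hΦ1 : Φ 1 = 1)
    (hΦpos : ∀ X, X.PosSemidef → (Φ X).PosSemidef) (hC : C.IsHermitian) {f g : ℝ → ℝ}
    (hf : ∀ i, 0 ≤ f (hC.eigenvalues i)) (hg : ∀ i, 0 ≤ g (hC.eigenvalues i))
    (hfg : Monovary (f ∘ hC.eigenvalues) (g ∘ hC.eigenvalues)) (w : m → ℂ) :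
    quadForm (Φ (cfc f C)) w ^ 2 * quadForm (Φ (cfc g C)) w ≤
      quadForm 1 w ^ 2 * quadForm (Φ (cfc f C * cfc g C * cfc f C)) w := by
  have hcont : ∀ h : ℝ → ℝ, ContinuousOn h (spectrum ℝ C) := fun h =>
    C.finite_real_spectrum.continuousOn h
  have hprod : cfc f C * cfc g C * cfc f C = cfc (fun x => f x * g x * f x) C := by
    rw [cfc_mul _ _ C (hcont _) (hcont _), cfc_mul _ _ C (hcont _) (hcont _)]
  have hmass : quadForm 1 w = ∑ i, quadForm (Φ (hC.eigenvectorProj i)) w := by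
    simpa [cfc_const_one ℝ C, hΦ1] using quadForm_map_cfc Φ hC (fun _ => 1) w
  rw [hprod, hmass, quadForm_map_cfc Φ hC, quadForm_map_cfc Φ hC, quadForm_map_cfc Φ hC]
  exact sq_sum_mul_sum_le (fun i => (hΦpos _ (hC.eigenvectorProj_posSemidef i)).quadForm_nonneg w)
    hf hg hfg

end PositiveMap

end Matrix

/-- For a monotone pair `(A, B)` and a unital positive linear map `Φ`, there is a unitary `V`
with `Φ(A) Φ(B) Φ(A) ≤ V Φ(ABA) V*`. -/
theorem chebyshev_positive_map {n d : ℕ} (A B : Matrix (Fin n) (Fin n) ℂ)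
    (hAB : MonotonePair A B)
    (Φ : Matrix (Fin n) (Fin n) ℂ →ₗ[ℂ] Matrix (Fin d) (Fin d) ℂ)
    (hΦ1 : Φ 1 = 1) (hΦpos : ∀ X : Matrix (Fin n) (Fin n) ℂ, X.PosSemidef → (Φ X).PosSemidef) :
    ∃ V : Matrix (Fin d) (Fin d) ℂ, V ∈ Matrix.unitaryGroup (Fin d) ℂ ∧
      loewnerLE (Φ A * Φ B * Φ A) (V * Φ (A * B * A) * Vᴴ) := by
  obtain ⟨C, f, g, hC, hf, hg, hf0, hg0, rfl, rfl⟩ := hAB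
  have hfC : ∀ i, 0 ≤ f (hC.isHermitian.eigenvalues i) := fun i => hf0 _ (hC.eigenvalues_nonneg i)
  have hgC : ∀ i, 0 ≤ g (hC.isHermitian.eigenvalues i) := fun i => hg0 _ (hC.eigenvalues_nonneg i)
  have hfg : Monovary (f ∘ hC.isHermitian.eigenvalues) (g ∘ hC.isHermitian.eigenvalues) :=
    fun i j h => hf.monovaryOn hg (hC.eigenvalues_nonneg i) (hC.eigenvalues_nonneg j) h
  have hA := hC.isHermitian.posSemidef_cfc hfC
  have hB := hC.isHermitian.posSemidef_cfc hgC
  set X := Φ (cfc f C)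
  have hX : X.PosSemidef := hΦpos _ hA
  have hXBX : ∀ u, (X * Φ (cfc g C) * X).quadForm u = (Φ (cfc g C)).quadForm (X *ᵥ u) := by
    intro u; rw [Matrix.quadForm_mulVec, hX.isHermitian.eq]
  have hP : (X * Φ (cfc g C) * X).IsHermitian := by
    simpa [hX.isHermitian.eq] using ((hΦpos _ hB).conjTranspose_mul_mul_same X).isHermitian
  have hQ : (Φ (cfc f C * cfc g C * cfc f C)).PosSemidef :=
    hΦpos _ (by simpa [hA.isHermitian.eq] using hB.conjTranspose_mul_mul_same (cfc f C))
  refine Matrix.exists_unitary_posSemidef_conj_sub_of_transfer (L := X) hP hQ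
    (fun u hu => by rw [hXBX, hu]; simp [Matrix.quadForm]) fun r hr u hu => ?_
  have hcheb := Matrix.sq_quadForm_map_cfc_mul_le Φ hΦ1 hΦpos hC.isHermitian hfC hgC hfg (X *ᵥ u)
  have hmom := hX.quadForm_one_mulVec_pow_three_le u
  rw [hXBX] at hu
  exact mul_le_of_pow_three_le_of_sq_mul_le hr.le (Matrix.PosSemidef.one.quadForm_nonneg _)
    (hQ.quadForm_nonneg _) hmom hcheb hu
end

section
/- Let A ≥ 0 in Mₙ(ℂ), p, q ≥ 0, and let Φ : Mₙ(ℂ) → M_d(ℂ) be a unital positive linear map. Then for every j, λ_j[Φ(A^p)] · λ_j[Φ(A^q)] ≤ λ_j[Φ(A^{p+q})]. -/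
open scoped Matrix ComplexOrder

/-- The eigenvalues of a Hermitian matrix, arranged in decreasing order (junk value otherwise). -/
noncomputable def eigDesc {m : ℕ} (X : Matrix (Fin m) (Fin m) ℂ) : Fin m → ℝ :=
  if hX : X.IsHermitian then fun j => (hX.eigenvalues ∘ Tuple.sort hX.eigenvalues) j.rev else 0

namespace EPI

open Matrix Complex

variable {d n : ℕ}

/-- Real quadratic form of a matrix. -/
noncomputable def qf (M : Matrix (Fin d) (Fin d) ℂ) (x : Fin d → ℂ) : ℝ :=
  (star x ⬝ᵥ M *ᵥ x).re

/-- Squared norm of a vector. -/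
noncomputable def n2 (x : Fin d → ℂ) : ℝ := ∑ i, normSq (x i)

lemma n2_nonneg (x : Fin d → ℂ) : 0 ≤ n2 x :=
  Finset.sum_nonneg fun _ _ => normSq_nonneg _

lemma n2_pos {x : Fin d → ℂ} (hx : x ≠ 0) : 0 < n2 x := by
  obtain ⟨i, hi⟩ := Function.ne_iff.mp hx
  exact Finset.sum_pos' (fun k _ => normSq_nonneg _) ⟨i, Finset.mem_univ i, normSq_pos.mpr hi⟩

lemma n2_eq_dot (w : Fin d → ℂ) : n2 w = (star w ⬝ᵥ w).re := by
  rw [dotProduct, Complex.re_sum]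
  refine Finset.sum_congr rfl fun i _ => ?_
  simp [Complex.mul_re, Complex.normSq_apply, mul_comm]

lemma qf_one (x : Fin d → ℂ) : qf 1 x = n2 x := by
  rw [qf, one_mulVec, n2_eq_dot]

lemma qf_add (M N : Matrix (Fin d) (Fin d) ℂ) (x : Fin d → ℂ) :
    qf (M + N) x = qf M x + qf N x := by
  simp [qf, add_mulVec, dotProduct_add]

lemma qf_sub (M N : Matrix (Fin d) (Fin d) ℂ) (x : Fin d → ℂ) :
    qf (M - N) x = qf M x - qf N x := by
  simp [qf, sub_mulVec, dotProduct_sub]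

lemma qf_smul (r : ℝ) (M : Matrix (Fin d) (Fin d) ℂ) (x : Fin d → ℂ) :
    qf ((r : ℂ) • M) x = r * qf M x := by
  simp [qf, smul_mulVec, dotProduct_smul, Complex.re_ofReal_mul]

lemma qf_nonneg_of_posSemidef {M : Matrix (Fin d) (Fin d) ℂ} (hM : M.PosSemidef)
    (x : Fin d → ℂ) : 0 ≤ qf M x := by
  have := hM.dotProduct_mulVec_nonneg x
  rw [Complex.le_def] at this
  simpa [qf] using this.1

lemma dot_conj (V M : Matrix (Fin d) (Fin d) ℂ) (y : Fin d → ℂ) :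
    star (V *ᵥ y) ⬝ᵥ M *ᵥ (V *ᵥ y) = star y ⬝ᵥ ((star V * M * V) *ᵥ y) := by
  rw [star_mulVec, ← dotProduct_mulVec, mulVec_mulVec, mulVec_mulVec, ← star_eq_conjTranspose,
    mul_assoc]

lemma dot_diag_re (μ : Fin d → ℝ) (y : Fin d → ℂ) :
    (star y ⬝ᵥ (Matrix.diagonal ((RCLike.ofReal : ℝ → ℂ) ∘ μ) *ᵥ y)).re
      = ∑ i, μ i * normSq (y i) := by
  rw [dotProduct, Complex.re_sum]
  refine Finset.sum_congr rfl fun i _ => ?_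
  simp [mulVec_diagonal, Complex.mul_re, Complex.normSq_apply]
  ring

lemma star_mul_self_mul_eq_diagonal' {M : Matrix (Fin d) (Fin d) ℂ} (hM : M.IsHermitian) :
    star (hM.eigenvectorUnitary : Matrix (Fin d) (Fin d) ℂ) * M
      * (hM.eigenvectorUnitary : Matrix (Fin d) (Fin d) ℂ)
      = Matrix.diagonal ((RCLike.ofReal : ℝ → ℂ) ∘ hM.eigenvalues) := by
  have h := hM.conjStarAlgAut_star_eigenvectorUnitary
  rw [Unitary.conjStarAlgAut_apply, Unitary.coe_star, star_star] at h
  exact h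

lemma qf_eigen {M : Matrix (Fin d) (Fin d) ℂ} (hM : M.IsHermitian) (y : Fin d → ℂ) :
    qf M ((hM.eigenvectorUnitary : Matrix (Fin d) (Fin d) ℂ) *ᵥ y)
      = ∑ i, hM.eigenvalues i * normSq (y i) := by
  rw [qf, dot_conj, star_mul_self_mul_eq_diagonal' hM, dot_diag_re]

lemma n2_unitary {V : Matrix (Fin d) (Fin d) ℂ} (hV : V ∈ Matrix.unitaryGroup (Fin d) ℂ)
    (y : Fin d → ℂ) : n2 (V *ᵥ y) = n2 y := by
  have h2 : star (V *ᵥ y) ⬝ᵥ (V *ᵥ y) = star y ⬝ᵥ ((star V * 1 * V) *ᵥ y) := by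
    rw [← dot_conj]; rw [one_mulVec]
  rw [n2_eq_dot, n2_eq_dot, h2, mul_one, Matrix.mem_unitaryGroup_iff'.mp hV, one_mulVec]

lemma eigDesc_eq {X : Matrix (Fin d) (Fin d) ℂ} (hX : X.IsHermitian) (j : Fin d) :
    eigDesc X j = hX.eigenvalues (Tuple.sort hX.eigenvalues j.rev) := by
  rw [eigDesc, dif_pos hX]; rfl

lemma eigDesc_nonneg {X : Matrix (Fin d) (Fin d) ℂ} (hX : X.PosSemidef) (j : Fin d) :
    0 ≤ eigDesc X j := by
  rw [eigDesc_eq hX.1]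
  exact hX.eigenvalues_nonneg _

/-- The key min-max principle, fused: if on the cone where the quadratic form of `X` is at least
`eigDesc X j` times the squared norm we have `qf Z ≥ c * n2`, then `c ≤ eigDesc Z j`. -/
lemma core {X Z : Matrix (Fin d) (Fin d) ℂ} (hX : X.IsHermitian) (hZ : Z.IsHermitian)
    (j : Fin d) {c : ℝ}
    (h : ∀ x : Fin d → ℂ, eigDesc X j * n2 x ≤ qf X x → c * n2 x ≤ qf Z x) :
    c ≤ eigDesc Z j := by
  classical
  set σ := Tuple.sort hX.eigenvalues with hσ
  set τ := Tuple.sort hZ.eigenvalues with hτ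
  set UX := (hX.eigenvectorUnitary : Matrix (Fin d) (Fin d) ℂ) with hUX
  set UZ := (hZ.eigenvectorUnitary : Matrix (Fin d) (Fin d) ℂ) with hUZ
  let L1 : (Fin d → ℂ) →ₗ[ℂ] ({i : Fin d // σ.symm i < j.rev} → ℂ) :=
    LinearMap.funLeft ℂ ℂ Subtype.val
  let L2 : (Fin d → ℂ) →ₗ[ℂ] ({i : Fin d // j.rev < τ.symm i} → ℂ) :=
    (LinearMap.funLeft ℂ ℂ Subtype.val).comp (Matrix.mulVecLin (star UZ * UX))
  let L := L1.prod L2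
  have card1 : Fintype.card {i : Fin d // σ.symm i < j.rev} = (j.rev : ℕ) := by
    have e0 : {i : Fin d // σ.symm i < j.rev} ≃ {k : Fin d // (k : ℕ) < (j.rev : ℕ)} :=
      Equiv.subtypeEquiv σ.symm (fun i => Fin.lt_def)
    rw [Fintype.card_congr e0]
    exact Fintype.card_fin_lt_of_le (le_of_lt j.rev.2)
  have card2 : Fintype.card {i : Fin d // j.rev < τ.symm i} = d - 1 - (j.rev : ℕ) := by
    have e1 : {i : Fin d // j.rev < τ.symm i} ≃ {k : Fin d // ¬ ((k : ℕ) < (j.rev : ℕ) + 1)} :=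
      Equiv.subtypeEquiv τ.symm (fun i => by
        rw [Fin.lt_def, Nat.lt_succ_iff, not_le])
    rw [Fintype.card_congr e1, Fintype.card_subtype_compl, Fintype.card_fin,
      Fintype.card_fin_lt_of_le (Nat.succ_le_of_lt j.rev.2)]
    omega
  have hker : 0 < Module.finrank ℂ (LinearMap.ker L) := by
    have h1 := LinearMap.finrank_range_add_finrank_ker L
    rw [Module.finrank_pi] at h1
    have h2 : Module.finrank ℂ (LinearMap.range L) ≤ d - 1 := by
      refine le_trans (Submodule.finrank_le _) ?_
      rw [Module.finrank_prod, Module.finrank_pi, Module.finrank_pi, card1, card2]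
      have := j.rev.2
      omega
    have hd : 0 < d := lt_of_le_of_lt (Nat.zero_le _) j.2
    rw [Fintype.card_fin] at h1
    omega
  obtain ⟨⟨y, hyker⟩, hy0⟩ := Module.finrank_pos_iff_exists_ne_zero.mp hker
  have hy : y ≠ 0 := fun hy' => hy0 (Subtype.ext hy')
  rw [LinearMap.mem_ker] at hyker
  have hL1 : ∀ i : Fin d, σ.symm i < j.rev → y i = 0 := by
    intro i hi
    have := congr_fun (congr_arg Prod.fst hyker) ⟨i, hi⟩
    simpa [L, L1] using this
  have hL2 : ∀ i : Fin d, j.rev < τ.symm i → ((star UZ * UX) *ᵥ y) i = 0 := by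
    intro i hi
    have := congr_fun (congr_arg Prod.snd hyker) ⟨i, hi⟩
    simpa [L, L2] using this
  set x := UX *ᵥ y with hx
  set z := (star UZ * UX) *ᵥ y with hz
  have hxz : x = UZ *ᵥ z := by
    rw [hz, mulVec_mulVec, ← mul_assoc, Matrix.mem_unitaryGroup_iff.mp (SetLike.coe_mem _),
      one_mul, hx]
  have hn2y : n2 x = n2 y := n2_unitary (SetLike.coe_mem _) y
  have hn2z : n2 x = n2 z := by rw [hxz]; exact n2_unitary (SetLike.coe_mem _) z
  have stepA : eigDesc X j * n2 x ≤ qf X x := by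
    rw [hn2y, hx, qf_eigen hX, n2, Finset.mul_sum]
    refine Finset.sum_le_sum fun i _ => ?_
    by_cases hyi : y i = 0
    · simp [hyi]
    · have hge : j.rev ≤ σ.symm i := le_of_not_gt (fun hc => hyi (hL1 i hc))
      have hmono := Tuple.monotone_sort hX.eigenvalues hge
      rw [Function.comp_apply, Function.comp_apply, Equiv.apply_symm_apply] at hmono
      rw [eigDesc_eq hX]
      exact mul_le_mul_of_nonneg_right hmono (normSq_nonneg _)
  have stepB := h x stepA
  have stepC : qf Z x ≤ eigDesc Z j * n2 x := by
    rw [hn2z, hxz, qf_eigen hZ, n2, Finset.mul_sum]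
    refine Finset.sum_le_sum fun i _ => ?_
    by_cases hzi : z i = 0
    · simp [hzi]
    · have hle : τ.symm i ≤ j.rev := le_of_not_gt (fun hc => hzi (hL2 i hc))
      have hmono := Tuple.monotone_sort hZ.eigenvalues hle
      rw [Function.comp_apply, Function.comp_apply, Equiv.apply_symm_apply] at hmono
      rw [eigDesc_eq hZ]
      exact mul_le_mul_of_nonneg_right hmono (normSq_nonneg _)
  have hpos : 0 < n2 x := by rw [hn2y]; exact n2_pos hy
  exact le_of_mul_le_mul_right (le_trans stepB stepC) hpos

section cfcFacts

variable {A : Matrix (Fin n) (Fin n) ℂ}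

lemma cfc_herm (hA : A.IsHermitian) (f : ℝ → ℝ) : (hA.cfc f).IsHermitian := by
  have h : IsSelfAdjoint (cfc f A) := cfc_predicate f A
  rwa [hA.cfc_eq f] at h

lemma cfc_combo (hA : A.IsHermitian) (a b : ℝ) (f g h : ℝ → ℝ) :
    (a : ℂ) • hA.cfc f + (b : ℂ) • hA.cfc g - hA.cfc h
      = hA.cfc (fun y => a * f y + b * g y - h y) := by
  unfold Matrix.IsHermitian.cfc
  simp only [Unitary.conjStarAlgAut_apply, Unitary.coe_star]
  have key : ∀ (D₁ D₂ D₃ U V : Matrix (Fin n) (Fin n) ℂ),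
      (a : ℂ) • (U * D₁ * V) + (b : ℂ) • (U * D₂ * V) - U * D₃ * V
        = U * ((a : ℂ) • D₁ + (b : ℂ) • D₂ - D₃) * V := by
    intro D₁ D₂ D₃ U V
    simp only [Matrix.mul_add, Matrix.add_mul, Matrix.mul_sub, Matrix.sub_mul,
      smul_mul_assoc, mul_smul_comm]
  rw [key]
  congr 2
  ext i k
  by_cases hik : i = k <;> simp [Matrix.diagonal_apply, hik]

lemma cfc_one' (hA : A.IsHermitian) : hA.cfc (fun _ => (1 : ℝ)) = 1 := by
  unfold Matrix.IsHermitian.cfc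
  have h1 : Matrix.diagonal ((RCLike.ofReal : ℝ → ℂ) ∘ (fun _ => (1 : ℝ)) ∘ hA.eigenvalues)
      = (1 : Matrix (Fin n) (Fin n) ℂ) := by
    rw [show (RCLike.ofReal : ℝ → ℂ) = Complex.ofReal from rfl]
    simp [Function.comp_def]
  simp only [Unitary.conjStarAlgAut_apply, Unitary.coe_star]
  rw [h1, mul_one, Matrix.mem_unitaryGroup_iff.mp (SetLike.coe_mem _)]

lemma mpow_eq (hA : A.IsHermitian) (r : ℝ) : mpow A r = hA.cfc (fun y => y ^ r) := by
  rw [mpow, hA.cfc_eq]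

lemma mpow_zero' (hA : A.IsHermitian) : mpow A 0 = 1 := by
  rw [mpow_eq hA]
  have h1 : (fun y : ℝ => y ^ (0 : ℝ)) = fun _ => (1 : ℝ) := funext fun y => Real.rpow_zero y
  rw [h1, cfc_one' hA]

lemma cfc_posSemidef (hA : A.IsHermitian) {f : ℝ → ℝ}
    (hf : ∀ i, 0 ≤ f (hA.eigenvalues i)) : (hA.cfc f).PosSemidef := by
  refine .of_dotProduct_mulVec_nonneg (cfc_herm hA f) fun x => ?_
  have hU' : star (hA.eigenvectorUnitary : Matrix (Fin n) (Fin n) ℂ)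
      * (hA.eigenvectorUnitary : Matrix (Fin n) (Fin n) ℂ) = 1 :=
    Matrix.mem_unitaryGroup_iff'.mp (SetLike.coe_mem _)
  have hU : (hA.eigenvectorUnitary : Matrix (Fin n) (Fin n) ℂ)
      * star (hA.eigenvectorUnitary : Matrix (Fin n) (Fin n) ℂ) = 1 :=
    Matrix.mem_unitaryGroup_iff.mp (SetLike.coe_mem _)
  set U := (hA.eigenvectorUnitary : Matrix (Fin n) (Fin n) ℂ) with hUdef
  set y := star U *ᵥ x with hy
  have hx : x = U *ᵥ y := by rw [hy, mulVec_mulVec, hU, one_mulVec]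
  rw [hx, dot_conj]
  unfold Matrix.IsHermitian.cfc
  simp only [Unitary.conjStarAlgAut_apply, Unitary.coe_star, ← hUdef]
  have key : star U * (U * Matrix.diagonal ((RCLike.ofReal : ℝ → ℂ) ∘ f ∘ hA.eigenvalues)
        * star U) * U
      = Matrix.diagonal ((RCLike.ofReal : ℝ → ℂ) ∘ f ∘ hA.eigenvalues) := by
    rw [show star U * (U * Matrix.diagonal ((RCLike.ofReal : ℝ → ℂ) ∘ f ∘ hA.eigenvalues)
        * star U) * U = (star U * U) * Matrix.diagonal ((RCLike.ofReal : ℝ → ℂ) ∘ f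
          ∘ hA.eigenvalues) * (star U * U) by simp only [mul_assoc], hU', one_mul, mul_one]
  rw [key, dotProduct]
  refine Finset.sum_nonneg fun i _ => ?_
  rw [mulVec_diagonal]
  have h2 : star (y i) * (((RCLike.ofReal : ℝ → ℂ) ∘ f ∘ hA.eigenvalues) i * y i)
      = ((f (hA.eigenvalues i) * normSq (y i) : ℝ) : ℂ) := by
    simp only [Function.comp_apply]
    rw [show (RCLike.ofReal : ℝ → ℂ) = Complex.ofReal from rfl]
    rw [mul_comm ((Complex.ofReal (f (hA.eigenvalues i)))) (y i), ← mul_assoc,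
      mul_comm (star (y i)) (y i), Complex.star_def, Complex.mul_conj,
      ← Complex.ofReal_mul, mul_comm (normSq (y i)) _]
  rw [Pi.star_apply, h2]
  rw [show (0 : ℂ) = ((0 : ℝ) : ℂ) from rfl, Complex.real_le_real]
  exact mul_nonneg (hf i) (normSq_nonneg _)

lemma mpow_posSemidef (hA : A.PosSemidef) (r : ℝ) : (mpow A r).PosSemidef := by
  rw [mpow_eq hA.1]
  exact cfc_posSemidef hA.1 fun i => Real.rpow_nonneg (hA.eigenvalues_nonneg i) r

end cfcFacts

lemma eigenvalues_one (hI : (1 : Matrix (Fin d) (Fin d) ℂ).IsHermitian) (i : Fin d) :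
    hI.eigenvalues i = 1 := by
  have h := star_mul_self_mul_eq_diagonal' hI
  rw [mul_one, Matrix.mem_unitaryGroup_iff'.mp (SetLike.coe_mem _)] at h
  have h2 := congr_fun (congr_fun h i) i
  rw [Matrix.one_apply_eq, Matrix.diagonal_apply_eq] at h2
  have h3 : ((1 : ℝ) : ℂ) = ((hI.eigenvalues i : ℝ) : ℂ) := by
    simpa using h2
  exact_mod_cast h3.symm

lemma eigDesc_one (j : Fin d) : eigDesc (1 : Matrix (Fin d) (Fin d) ℂ) j = 1 := by
  have hI : (1 : Matrix (Fin d) (Fin d) ℂ).IsHermitian := Matrix.isHermitian_one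
  rw [eigDesc_eq hI, eigenvalues_one hI]

lemma scalar_key {p q α : ℝ} (hp : 0 < p) (hq : 0 < q) (hα : 0 < α) {y : ℝ} (hy : 0 ≤ y) :
    y ^ p ≤ (p / (p + q)) * (α ^ (-(q / p)) * y ^ (p + q)) + (q / (p + q)) * α := by
  have hpq : 0 < p + q := by linarith
  have h := Real.geom_mean_le_arith_mean2_weighted
    (w₁ := p / (p + q)) (w₂ := q / (p + q)) (p₁ := α ^ (-(q / p)) * y ^ (p + q)) (p₂ := α)
    (by positivity) (by positivity) (by positivity) hα.le (by field_simp)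
  refine le_trans (le_of_eq ?_) h
  rw [Real.mul_rpow (by positivity) (by positivity), ← Real.rpow_mul hα.le, ← Real.rpow_mul hy]
  rw [show -(q / p) * (p / (p + q)) = -(q / (p + q)) by field_simp,
    show (p + q) * (p / (p + q)) = p by field_simp]
  rw [mul_right_comm, ← Real.rpow_add hα, neg_add_cancel, Real.rpow_zero, one_mul]

end EPI

/-- For `A ≥ 0`, `p, q ≥ 0` and a unital positive linear map `Φ`,
`λ_j[Φ(A^p)] λ_j[Φ(A^q)] ≤ λ_j[Φ(A^{p+q})]` for every `j`. -/
theorem eigenvalue_product_inequality {n d : ℕ} (A : Matrix (Fin n) (Fin n) ℂ)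
    (hA : A.PosSemidef) (p q : ℝ) (hp : 0 ≤ p) (hq : 0 ≤ q)
    (Φ : Matrix (Fin n) (Fin n) ℂ →ₗ[ℂ] Matrix (Fin d) (Fin d) ℂ)
    (hΦ1 : Φ 1 = 1) (hΦpos : ∀ X : Matrix (Fin n) (Fin n) ℂ, X.PosSemidef → (Φ X).PosSemidef)
    (j : Fin d) :
    eigDesc (Φ (mpow A p)) j * eigDesc (Φ (mpow A q)) j ≤ eigDesc (Φ (mpow A (p + q))) j := by
  classical
  have hA' : A.IsHermitian := hA.1
  have main_half : ∀ p q : ℝ, 0 < p → 0 < q →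
      0 < eigDesc (Φ (mpow A p)) j →
      eigDesc (Φ (mpow A q)) j ≤ (eigDesc (Φ (mpow A p)) j) ^ (q / p) →
      eigDesc (Φ (mpow A p)) j * eigDesc (Φ (mpow A q)) j
        ≤ eigDesc (Φ (mpow A (p + q))) j := by
    clear hp hq p q
    intro p q hp hq hα hβα
    set X := Φ (mpow A p) with hXdef
    set Z := Φ (mpow A (p + q)) with hZdef
    have hXpsd : X.PosSemidef := hΦpos _ (EPI.mpow_posSemidef hA p)
    have hZpsd : Z.PosSemidef := hΦpos _ (EPI.mpow_posSemidef hA (p + q))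
    set α := eigDesc X j with hαdef
    set β := eigDesc (Φ (mpow A q)) j with hβdef
    set lam := p / (p + q) with hlam
    set c1 := lam * α ^ (-(q / p)) with hc1
    set c2 := (q / (p + q)) * α with hc2
    have hpq : 0 < p + q := by linarith
    have hlam0 : 0 < lam := by rw [hlam]; positivity
    have hc10 : 0 < c1 := by rw [hc1]; positivity
    have hinner : ((c1 : ℂ) • mpow A (p + q) + (c2 : ℂ) • (1 : Matrix (Fin n) (Fin n) ℂ)
        - mpow A p).PosSemidef := by
      have hid : (c1 : ℂ) • mpow A (p + q) + (c2 : ℂ) • (1 : Matrix (Fin n) (Fin n) ℂ)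
          - mpow A p
          = hA'.cfc (fun y => c1 * (y ^ (p + q)) + c2 * 1 - y ^ p) := by
        rw [EPI.mpow_eq hA' (p + q), EPI.mpow_eq hA' p, ← EPI.cfc_one' hA']
        exact EPI.cfc_combo hA' c1 c2 _ _ _
      rw [hid]
      refine EPI.cfc_posSemidef hA' fun i => ?_
      have hkey := EPI.scalar_key hp hq hα (hA.eigenvalues_nonneg i)
      have hassoc : c1 * (hA'.eigenvalues i ^ (p + q))
          = lam * (α ^ (-(q / p)) * hA'.eigenvalues i ^ (p + q)) := by
        rw [hc1, mul_assoc]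
      simp only [mul_one]
      linarith [hkey, hassoc, hc2]
    have hPSDouter : ((c1 : ℂ) • Z + (c2 : ℂ) • (1 : Matrix (Fin d) (Fin d) ℂ)
        - X).PosSemidef := by
      have h := hΦpos _ hinner
      rw [map_sub, map_add, map_smul, map_smul, hΦ1] at h
      exact h
    refine EPI.core hXpsd.1 hZpsd.1 j ?_
    intro x hx
    have h0 := EPI.qf_nonneg_of_posSemidef hPSDouter x
    rw [EPI.qf_sub, EPI.qf_add, EPI.qf_smul, EPI.qf_smul, EPI.qf_one] at h0
    have hn2 := EPI.n2_nonneg x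
    have h1 : lam * α * EPI.n2 x ≤ c1 * EPI.qf Z x := by
      have hαc2 : α - c2 = lam * α := by
        rw [hc2, hlam]
        field_simp
        ring
      nlinarith [hx]
    have hdiv : lam * α / c1 = α * α ^ (q / p) := by
      rw [hc1, Real.rpow_neg hα.le]
      have hne : (α ^ (q / p)) ≠ 0 := by positivity
      field_simp
    have h3 : α * β ≤ lam * α / c1 := by
      rw [hdiv]
      exact mul_le_mul_of_nonneg_left hβα hα.le
    calc α * β * EPI.n2 x ≤ (lam * α / c1) * EPI.n2 x :=
          mul_le_mul_of_nonneg_right h3 hn2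
      _ ≤ EPI.qf Z x := by
          rw [div_mul_eq_mul_div, div_le_iff₀ hc10]
          calc lam * α * EPI.n2 x ≤ c1 * EPI.qf Z x := h1
            _ = EPI.qf Z x * c1 := mul_comm _ _
  rcases eq_or_lt_of_le hp with hp0 | hp0
  · rw [← hp0, zero_add, EPI.mpow_zero' hA', hΦ1, EPI.eigDesc_one, one_mul]
  rcases eq_or_lt_of_le hq with hq0 | hq0
  · rw [← hq0, add_zero, EPI.mpow_zero' hA', hΦ1, EPI.eigDesc_one, mul_one]
  have hXpsd : (Φ (mpow A p)).PosSemidef := hΦpos _ (EPI.mpow_posSemidef hA p)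
  have hYpsd : (Φ (mpow A q)).PosSemidef := hΦpos _ (EPI.mpow_posSemidef hA q)
  have hZpsd : (Φ (mpow A (p + q))).PosSemidef := hΦpos _ (EPI.mpow_posSemidef hA (p + q))
  have hα0 : 0 ≤ eigDesc (Φ (mpow A p)) j := EPI.eigDesc_nonneg hXpsd j
  have hβ0 : 0 ≤ eigDesc (Φ (mpow A q)) j := EPI.eigDesc_nonneg hYpsd j
  rcases eq_or_lt_of_le hα0 with hα | hα
  · rw [← hα, zero_mul]
    exact EPI.eigDesc_nonneg hZpsd j
  rcases eq_or_lt_of_le hβ0 with hβ | hβ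
  · rw [← hβ, mul_zero]
    exact EPI.eigDesc_nonneg hZpsd j
  rcases le_total ((eigDesc (Φ (mpow A q)) j) ^ q⁻¹) ((eigDesc (Φ (mpow A p)) j) ^ p⁻¹)
    with hcmp | hcmp
  · refine main_half p q hp0 hq0 hα ?_
    calc eigDesc (Φ (mpow A q)) j = ((eigDesc (Φ (mpow A q)) j) ^ q⁻¹) ^ q := by
          rw [← Real.rpow_mul hβ.le, inv_mul_cancel₀ hq0.ne', Real.rpow_one]
      _ ≤ ((eigDesc (Φ (mpow A p)) j) ^ p⁻¹) ^ q :=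
          Real.rpow_le_rpow (by positivity) hcmp hq0.le
      _ = (eigDesc (Φ (mpow A p)) j) ^ (q / p) := by
          rw [← Real.rpow_mul hα.le, inv_mul_eq_div]
  · have h := main_half q p hq0 hp0 hβ (by
      calc eigDesc (Φ (mpow A p)) j = ((eigDesc (Φ (mpow A p)) j) ^ p⁻¹) ^ p := by
            rw [← Real.rpow_mul hα.le, inv_mul_cancel₀ hp0.ne', Real.rpow_one]
        _ ≤ ((eigDesc (Φ (mpow A q)) j) ^ q⁻¹) ^ p :=
            Real.rpow_le_rpow (by positivity) hcmp hp0.le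
        _ = (eigDesc (Φ (mpow A q)) j) ^ (p / q) := by
            rw [← Real.rpow_mul hβ.le, inv_mul_eq_div])
    rw [add_comm q p] at h
    rw [mul_comm]
    exact h
end

section
/- For every self-adjoint projection E ∈ Mₙ(ℂ), positive semidefinite A ∈ Mₙ(ℂ), and p, q ≥ 0: ‖E A^p E‖ · ‖E A^q E‖ ≤ ‖E A^{p+q} E‖, where ‖·‖ is the operator norm. -/
/-!
Diagonalising `A`, the quadratic form `⟪w, A^t w⟫` is the moment `∑ λⱼ^t cⱼ` of the
eigenvalues against the weights `cⱼ = |⟪uⱼ, w⟫|²`, so Hölder's inequality gives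
`⟪w, A^p w⟫ ≤ ⟪w, A^r w⟫^(p/r) ‖w‖^(2(1 - p/r))` for `0 ≤ p ≤ r`. Taking `w = E x` and using that
the norm of a positive semidefinite `M` is the least `r` with `⟪x, M x⟫ ≤ r ‖x‖²`, this becomes
`‖E A^p E‖ ≤ ‖E A^(p+q) E‖^(p/(p+q))` for a projection `E`; multiplying by the same bound for `q`
gives the theorem.
-/

open scoped Matrix ComplexOrder

lemma Real.sum_rpow_mul_le {ι : Type*} (s : Finset ι) {c x : ι → ℝ} (hc : ∀ i, 0 ≤ c i)
    (hx : ∀ i, 0 ≤ x i) {p r : ℝ} (hp : 0 ≤ p) (hpr : p ≤ r) :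
    ∑ i ∈ s, x i ^ p * c i ≤ (∑ i ∈ s, x i ^ r * c i) ^ (p / r) * (∑ i ∈ s, c i) ^ (1 - p / r) := by
  rcases hp.eq_or_lt with rfl | hp
  · simp
  have hholder := Real.inner_le_weight_mul_Lp_of_nonneg s ((one_le_div₀ hp).2 hpr) c
    (fun i => x i ^ p) hc fun i => Real.rpow_nonneg (hx i) p
  have hpow : ∀ i, (x i ^ p) ^ (r / p) = x i ^ r := fun i => by
    rw [← Real.rpow_mul (hx i), mul_div_cancel₀ r hp.ne']
  simp only [hpow, inv_div, mul_comm (c _)] at hholder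
  rwa [mul_comm] at hholder

lemma cfc_rpow_zero {A : Type*} [Ring A] [StarRing A] [Algebra ℝ A] [TopologicalSpace A]
    [ContinuousFunctionalCalculus ℝ A IsSelfAdjoint] (a : A) (ha : IsSelfAdjoint a := by cfc_tac) :
    cfc (fun x : ℝ => x ^ (0 : ℝ)) a = 1 := by
  simpa only [Real.rpow_zero] using cfc_const_one ℝ a

namespace Matrix

variable {ι : Type*} [Fintype ι]

lemma star_dotProduct_conjTranspose_mul_mul_mulVec {R : Type*} [CommSemiring R] [StarRing R]
    (E X : Matrix ι ι R) (x : ι → R) :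
    star x ⬝ᵥ ((Eᴴ * X * E) *ᵥ x) = star (E *ᵥ x) ⬝ᵥ (X *ᵥ (E *ᵥ x)) := by
  rw [← mulVec_mulVec, ← mulVec_mulVec, dotProduct_mulVec, star_mulVec]

variable [DecidableEq ι]

lemma IsHermitian.star_dotProduct_cfc_mulVec {𝕜 : Type*} [RCLike 𝕜] {A : Matrix ι ι 𝕜}
    (hA : A.IsHermitian) (f : ℝ → ℝ) (w : ι → 𝕜) :
    star w ⬝ᵥ (cfc f A *ᵥ w) =
      ((∑ j, f (hA.eigenvalues j) *
        ‖(star (hA.eigenvectorUnitary : Matrix ι ι 𝕜) *ᵥ w) j‖ ^ 2 : ℝ) : 𝕜) := by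
  have hU : star w ᵥ* (hA.eigenvectorUnitary : Matrix ι ι 𝕜) =
      star (star (hA.eigenvectorUnitary : Matrix ι ι 𝕜) *ᵥ w) := by
    rw [star_mulVec, star_eq_conjTranspose, conjTranspose_conjTranspose]
  rw [hA.cfc_eq, IsHermitian.cfc, Unitary.conjStarAlgAut_apply, ← mulVec_mulVec, ← mulVec_mulVec,
    dotProduct_mulVec, hU]
  push_cast
  refine Finset.sum_congr rfl fun j _ => ?_
  simp only [mulVec_diagonal, Pi.star_apply, Function.comp_apply, RCLike.star_def]
  rw [mul_left_comm, RCLike.conj_mul]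

lemma PosSemidef.re_dotProduct_cfc_rpow_le {𝕜 : Type*} [RCLike 𝕜] {A : Matrix ι ι 𝕜}
    (hA : A.PosSemidef) (w : ι → 𝕜) {p r : ℝ} (hp : 0 ≤ p) (hpr : p ≤ r) :
    RCLike.re (star w ⬝ᵥ (cfc (fun x : ℝ => x ^ p) A *ᵥ w)) ≤
      RCLike.re (star w ⬝ᵥ (cfc (fun x : ℝ => x ^ r) A *ᵥ w)) ^ (p / r) *
        RCLike.re (star w ⬝ᵥ w) ^ (1 - p / r) := by
  have hw : star w ⬝ᵥ w = star w ⬝ᵥ (cfc (fun x : ℝ => x ^ (0 : ℝ)) A *ᵥ w) := by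
    rw [cfc_rpow_zero A hA.1, one_mulVec]
  simp only [hw, hA.1.star_dotProduct_cfc_mulVec, RCLike.ofReal_re, Real.rpow_zero, one_mul]
  exact Real.sum_rpow_mul_le _ (fun j => sq_nonneg _) hA.eigenvalues_nonneg hp hpr

open scoped Matrix.Norms.L2Operator MatrixOrder

lemma PosSemidef.cfc_rpow {A : Matrix ι ι ℂ} (hA : A.PosSemidef) (p : ℝ) :
    (cfc (fun x : ℝ => x ^ p) A).PosSemidef :=
  nonneg_iff_posSemidef.1 <| cfc_nonneg fun _ hx =>
    Real.rpow_nonneg (spectrum_nonneg_of_nonneg (nonneg_iff_posSemidef.2 hA) hx) p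

lemma PosSemidef.norm_le_iff {M : Matrix ι ι ℂ} (hM : M.PosSemidef) {r : ℝ} (hr : 0 ≤ r) :
    ‖M‖ ≤ r ↔ ∀ x : ι → ℂ, (star x ⬝ᵥ (M *ᵥ x)).re ≤ r * (star x ⬝ᵥ x).re := by
  have hH : (algebraMap ℝ (Matrix ι ι ℂ) r - M).IsHermitian :=
    (IsSelfAdjoint.algebraMap _ (.all r)).sub hM.1
  rw [CStarAlgebra.norm_le_iff_le_algebraMap M hr (nonneg_iff_posSemidef.2 hM), le_iff,
    posSemidef_iff_dotProduct_mulVec, and_iff_right hH]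
  refine forall_congr' fun x => ?_
  have him : 0 = (star x ⬝ᵥ ((algebraMap ℝ (Matrix ι ι ℂ)) r - M) *ᵥ x).im :=
    (hH.im_star_dotProduct_mulVec_self x).symm
  rw [Complex.nonneg_iff, and_iff_left him, Algebra.algebraMap_eq_smul_one, sub_mulVec,
    dotProduct_sub, smul_mulVec, one_mulVec, dotProduct_smul, Complex.sub_re, Complex.real_smul,
    Complex.re_ofReal_mul, sub_nonneg]

lemma PosSemidef.re_dotProduct_le_norm_mul {M : Matrix ι ι ℂ} (hM : M.PosSemidef) (x : ι → ℂ) :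
    (star x ⬝ᵥ (M *ᵥ x)).re ≤ ‖M‖ * (star x ⬝ᵥ x).re :=
  (hM.norm_le_iff (norm_nonneg M)).1 le_rfl x

lemma norm_conjTranspose_mul_cfc_rpow_mul_le (E : Matrix ι ι ℂ) {A : Matrix ι ι ℂ}
    (hA : A.PosSemidef) {p r : ℝ} (hp : 0 ≤ p) (hpr : p ≤ r) :
    ‖Eᴴ * cfc (fun x : ℝ => x ^ p) A * E‖ ≤
      ‖Eᴴ * cfc (fun x : ℝ => x ^ r) A * E‖ ^ (p / r) * ‖Eᴴ * E‖ ^ (1 - p / r) := by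
  set θ := p / r
  have hθ : 0 ≤ θ := div_nonneg hp (hp.trans hpr)
  have hθ1 : 0 ≤ 1 - θ := sub_nonneg.2 (div_le_one_of_le₀ hpr (hp.trans hpr))
  set Nr := ‖Eᴴ * cfc (fun x : ℝ => x ^ r) A * E‖
  set N0 := ‖Eᴴ * E‖
  rw [((hA.cfc_rpow p).conjTranspose_mul_mul_same E).norm_le_iff (by positivity)]
  intro x
  set w := E *ᵥ x
  set s := (star x ⬝ᵥ x).re
  have hs : 0 ≤ s := (Complex.nonneg_iff.1 (dotProduct_star_self_nonneg x)).1
  have hww : 0 ≤ (star w ⬝ᵥ w).re := (Complex.nonneg_iff.1 (dotProduct_star_self_nonneg w)).1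
  have hr : (star w ⬝ᵥ (cfc (fun x : ℝ => x ^ r) A *ᵥ w)).re ≤ Nr * s := by
    rw [← star_dotProduct_conjTranspose_mul_mul_mulVec]
    exact ((hA.cfc_rpow r).conjTranspose_mul_mul_same E).re_dotProduct_le_norm_mul x
  have h0 : (star w ⬝ᵥ w).re ≤ N0 * s := by
    have h := star_dotProduct_conjTranspose_mul_mul_mulVec E 1 x
    rw [mul_one, one_mulVec] at h
    rw [← h]
    exact (posSemidef_conjTranspose_mul_self E).re_dotProduct_le_norm_mul x
  have hss : s ^ θ * s ^ (1 - θ) = s := by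
    rw [← Real.rpow_add' hs (by norm_num), add_sub_cancel, Real.rpow_one]
  calc (star x ⬝ᵥ ((Eᴴ * cfc (fun x : ℝ => x ^ p) A * E) *ᵥ x)).re
      = (star w ⬝ᵥ (cfc (fun x : ℝ => x ^ p) A *ᵥ w)).re := by
        rw [star_dotProduct_conjTranspose_mul_mul_mulVec]
    _ ≤ (star w ⬝ᵥ (cfc (fun x : ℝ => x ^ r) A *ᵥ w)).re ^ θ * (star w ⬝ᵥ w).re ^ (1 - θ) :=
        hA.re_dotProduct_cfc_rpow_le w hp hpr
    _ ≤ (Nr * s) ^ θ * (N0 * s) ^ (1 - θ) :=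
        mul_le_mul (Real.rpow_le_rpow ((hA.cfc_rpow r).re_dotProduct_nonneg w) hr hθ)
          (Real.rpow_le_rpow hww h0 hθ1) (Real.rpow_nonneg hww _) (by positivity)
    _ = Nr ^ θ * N0 ^ (1 - θ) * s := by
        rw [Real.mul_rpow (norm_nonneg _) hs, Real.mul_rpow (norm_nonneg _) hs]
        linear_combination (Nr ^ θ * N0 ^ (1 - θ)) * hss

end Matrix

open scoped Matrix.Norms.L2Operator in
/-- For a self-adjoint projection `E`, `A ≥ 0` and `p, q ≥ 0`,
`‖E A^p E‖ ‖E A^q E‖ ≤ ‖E A^{p+q} E‖` in the operator norm. -/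
theorem compression_norm_inequality {n : ℕ} (E A : Matrix (Fin n) (Fin n) ℂ)
    (hE : Eᴴ = E) (hE2 : E * E = E) (hA : A.PosSemidef) (p q : ℝ) (hp : 0 ≤ p) (hq : 0 ≤ q) :
    ‖E * mpow A p * E‖ * ‖E * mpow A q * E‖ ≤ ‖E * mpow A (p + q) * E‖ := by
  have hE1 : ‖E‖ ≤ 1 := IsStarProjection.norm_le E ⟨hE2, hE⟩
  set N := ‖E * mpow A (p + q) * E‖
  have hN : 0 ≤ N := norm_nonneg _
  have hbound : ∀ t, 0 ≤ t → t ≤ p + q → ‖E * mpow A t * E‖ ≤ N ^ (t / (p + q)) := by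
    intro t ht htpq
    have h := Matrix.norm_conjTranspose_mul_cfc_rpow_mul_le E hA ht htpq
    rw [hE, hE2] at h
    exact h.trans (mul_le_of_le_one_right (by positivity) (Real.rpow_le_one (norm_nonneg E) hE1
      (sub_nonneg.2 (div_le_one_of_le₀ htpq (ht.trans htpq)))))
  rcases (add_nonneg hp hq).eq_or_lt with hpq | hpq
  · obtain ⟨rfl, rfl⟩ : p = 0 ∧ q = 0 := ⟨by linarith, by linarith⟩
    have hE0 : E * mpow A 0 * E = E := by rw [mpow, cfc_rpow_zero A hA.1, mul_one, hE2]
    simp only [N, add_zero, hE0]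
    exact mul_le_of_le_one_left (norm_nonneg E) hE1
  calc ‖E * mpow A p * E‖ * ‖E * mpow A q * E‖ ≤ N ^ (p / (p + q)) * N ^ (q / (p + q)) :=
        mul_le_mul (hbound p hp (by linarith)) (hbound q hq (by linarith)) (norm_nonneg _)
          (by positivity)
    _ = N := by
        rw [← Real.rpow_add' hN (by rw [← add_div, div_self hpq.ne']; norm_num),
          ← add_div, div_self hpq.ne', Real.rpow_one]
end

section
/- For any A, B ∈ Mₙ(ℂ) there exists a partial isometry V ∈ Mₙ(ℂ) such that |A+B| ≤ (|A| + |B| + V*(|A*| + |B*|)V)/2. -/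
open scoped Matrix ComplexOrder

/-!
Write `A = W|A|` (polar decomposition, `W` a partial isometry). Then `|A*| W = A` and
`W* |A*| W = |A|`, so for every `V`
`|A| + V* |A*| V - V* A - A* V = (V - W)* |A*| (V - W) ≥ 0`.
Choosing for `V` the partial isometry of the polar decomposition of `A + B`, for which
`V* (A + B) = (A + B)* V = |A + B|`, and adding these inequalities for `A` and for `B` gives
`2 |A + B| ≤ |A| + |B| + V* (|A*| + |B*|) V`.
-/

open Matrix
open scoped MatrixOrder

namespace Matrix

variable {m 𝕜 : Type*} [Fintype m] [DecidableEq m] [RCLike 𝕜]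

lemma mul_cfc_inv_mul_self {a : Matrix m m 𝕜} (ha : IsSelfAdjoint a) :
    a * cfc (·⁻¹ : ℝ → ℝ) a * a = a := by
  have hcont : ∀ f : ℝ → ℝ, ContinuousOn f (spectrum ℝ a) :=
    a.finite_real_spectrum.continuousOn
  calc a * cfc (·⁻¹ : ℝ → ℝ) a * a = cfc (fun x : ℝ => x * x⁻¹ * x) a := by
        rw [cfc_mul (fun x : ℝ => x * x⁻¹) (fun x => x) a (hcont _) (hcont _),
          cfc_mul (fun x : ℝ => x) (·⁻¹) a (hcont _) (hcont _), cfc_id' ℝ a]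
    _ = a := by simp only [mul_inv_mul_cancel]; exact cfc_id' ℝ a

/-- The partial isometry `W` of the polar decomposition `X = W |X|`: since `0⁻¹ = 0` in `ℝ`,
`cfc (·⁻¹) |X|` is the Moore–Penrose inverse of `|X|`. -/
noncomputable def polarIsometry (X : Matrix m m 𝕜) : Matrix m m 𝕜 :=
  X * cfc (·⁻¹ : ℝ → ℝ) (CFC.abs X)

section Polar

variable (X : Matrix m m 𝕜)

lemma abs_mul_abs_eq_conjTranspose_mul_self : CFC.abs X * CFC.abs X = Xᴴ * X := CFC.abs_mul_abs X

lemma isHermitian_abs : (CFC.abs X).IsHermitian := (CFC.abs_nonneg X).isSelfAdjoint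

lemma polarIsometry_mul_abs : polarIsometry X * CFC.abs X = X := by
  set P := CFC.abs X
  set Q := 1 - cfc (·⁻¹ : ℝ → ℝ) P * P
  have hPQ : P * Q = 0 := by
    rw [mul_sub, mul_one, ← mul_assoc, mul_cfc_inv_mul_self (isHermitian_abs X), sub_self]
  -- `X Q` vanishes because `(X Q)ᴴ (X Q) = Qᴴ P (P Q)`.
  have hXQ : X * Q = 0 := by
    rw [← conjTranspose_mul_self_eq_zero, conjTranspose_mul, mul_assoc, ← mul_assoc Xᴴ,
      ← abs_mul_abs_eq_conjTranspose_mul_self, mul_assoc, hPQ, mul_zero, mul_zero]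
  rw [mul_sub, mul_one, sub_eq_zero] at hXQ
  rw [polarIsometry, mul_assoc, ← hXQ]

lemma conjTranspose_polarIsometry_mul_self : (polarIsometry X)ᴴ * X = CFC.abs X := by
  set P := CFC.abs X
  have hg : (cfc (·⁻¹ : ℝ → ℝ) P)ᴴ = cfc (·⁻¹ : ℝ → ℝ) P := IsSelfAdjoint.cfc
  rw [polarIsometry, conjTranspose_mul, hg, mul_assoc, ← abs_mul_abs_eq_conjTranspose_mul_self,
    ← mul_assoc, ((Commute.refl P).cfc_real _).eq, mul_cfc_inv_mul_self (isHermitian_abs X)]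

lemma conjTranspose_mul_polarIsometry : Xᴴ * polarIsometry X = CFC.abs X := by
  simpa [(isHermitian_abs X).eq] using
    congrArg conjTranspose (conjTranspose_polarIsometry_mul_self X)

lemma conjTranspose_polarIsometry_mul_polarIsometry :
    (polarIsometry X)ᴴ * polarIsometry X = CFC.abs X * cfc (·⁻¹ : ℝ → ℝ) (CFC.abs X) := by
  show (polarIsometry X)ᴴ * (X * _) = _
  rw [← mul_assoc, conjTranspose_polarIsometry_mul_self]

lemma polarIsometry_mul_conjTranspose_mul_self :
    polarIsometry X * (polarIsometry X)ᴴ * polarIsometry X = polarIsometry X := by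
  rw [mul_assoc, conjTranspose_polarIsometry_mul_polarIsometry, ← mul_assoc,
    polarIsometry_mul_abs, polarIsometry]

lemma conjTranspose_polarIsometry_mul_self_mul_abs :
    (polarIsometry X)ᴴ * polarIsometry X * CFC.abs X = CFC.abs X := by
  rw [mul_assoc, polarIsometry_mul_abs, conjTranspose_polarIsometry_mul_self]

lemma abs_mul_conjTranspose_polarIsometry_mul_self :
    CFC.abs X * ((polarIsometry X)ᴴ * polarIsometry X) = CFC.abs X := by
  simpa [(isHermitian_abs X).eq, mul_assoc] using
    congrArg conjTranspose (conjTranspose_polarIsometry_mul_self_mul_abs X)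

lemma abs_conjTranspose_eq :
    CFC.abs Xᴴ = polarIsometry X * CFC.abs X * (polarIsometry X)ᴴ := by
  set W := polarIsometry X
  set P := CFC.abs X
  have hPW : P * Wᴴ = Xᴴ := by
    simpa [(isHermitian_abs X).eq] using congrArg conjTranspose (polarIsometry_mul_abs X)
  have hsq : (W * P * Wᴴ) ^ 2 = CFC.abs Xᴴ ^ 2 := by
    rw [sq, sq, abs_mul_abs_eq_conjTranspose_mul_self, conjTranspose_conjTranspose]
    calc W * P * Wᴴ * (W * P * Wᴴ) = W * (P * (Wᴴ * W)) * P * Wᴴ := by simp only [mul_assoc]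
      _ = X * Xᴴ := by
        rw [abs_mul_conjTranspose_polarIsometry_mul_self, polarIsometry_mul_abs, mul_assoc, hPW]
  exact ((CFC.sq_eq_sq_iff _ _ (star_right_conjugate_nonneg (CFC.abs_nonneg X) W)
    (CFC.abs_nonneg _)).mp hsq).symm

lemma abs_conjTranspose_mul_polarIsometry : CFC.abs Xᴴ * polarIsometry X = X := by
  rw [abs_conjTranspose_eq, mul_assoc, mul_assoc, abs_mul_conjTranspose_polarIsometry_mul_self,
    polarIsometry_mul_abs]

lemma conjTranspose_polarIsometry_mul_abs_conjTranspose :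
    (polarIsometry X)ᴴ * CFC.abs Xᴴ = Xᴴ := by
  simpa [(isHermitian_abs Xᴴ).eq] using
    congrArg conjTranspose (abs_conjTranspose_mul_polarIsometry X)

lemma conjTranspose_polarIsometry_mul_abs_conjTranspose_mul :
    (polarIsometry X)ᴴ * CFC.abs Xᴴ * polarIsometry X = CFC.abs X := by
  rw [conjTranspose_polarIsometry_mul_abs_conjTranspose, conjTranspose_mul_polarIsometry]

end Polar

lemma conjTranspose_mul_add_conjTranspose_mul_le (A V : Matrix m m 𝕜) :
    Vᴴ * A + Aᴴ * V ≤ CFC.abs A + Vᴴ * CFC.abs Aᴴ * V := by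
  set W := polarIsometry A
  set S := CFC.abs Aᴴ
  have hSW : S * W = A := abs_conjTranspose_mul_polarIsometry A
  have hWS : Wᴴ * S = Aᴴ := conjTranspose_polarIsometry_mul_abs_conjTranspose A
  have hgap : CFC.abs A + Vᴴ * S * V - (Vᴴ * A + Aᴴ * V) = (V - W)ᴴ * S * (V - W) := by
    rw [conjTranspose_sub, sub_mul, sub_mul, mul_sub, mul_sub,
      conjTranspose_polarIsometry_mul_abs_conjTranspose_mul, mul_assoc Vᴴ S W, hSW, hWS]
    abel
  rw [← sub_nonneg, hgap]
  exact star_left_conjugate_nonneg (CFC.abs_nonneg _) _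

lemma le_inv_two_smul_of_add_self_le {X Y : Matrix m m 𝕜} (h : X + X ≤ Y) :
    X ≤ (2 : 𝕜)⁻¹ • Y := by
  have := smul_le_smul_of_nonneg_left h (by positivity : (0 : 𝕜) ≤ 2⁻¹)
  rwa [← two_smul 𝕜 X, smul_smul, inv_mul_cancel₀ two_ne_zero, one_smul] at this

end Matrix

lemma matAbs_eq_abs {n : ℕ} (X : Matrix (Fin n) (Fin n) ℂ) : matAbs X = CFC.abs X := by
  rw [CFC.abs, CFC.sqrt_eq_real_sqrt _ (star_mul_self_nonneg X), cfcₙ_eq_cfc, matAbs,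
    star_eq_conjTranspose]

/-- Triangle-type inequality: for any `A, B` there is a partial isometry `V` with
`|A + B| ≤ (|A| + |B| + V* (|A*| + |B*|) V)/2`. -/
theorem triangle_type_inequality {n : ℕ} (A B : Matrix (Fin n) (Fin n) ℂ) :
    ∃ V : Matrix (Fin n) (Fin n) ℂ, V * Vᴴ * V = V ∧
      loewnerLE (matAbs (A + B))
        ((2 : ℂ)⁻¹ • (matAbs A + matAbs B + Vᴴ * (matAbs Aᴴ + matAbs Bᴴ) * V)) := by
  simp only [matAbs_eq_abs]
  set V := polarIsometry (A + B)
  refine ⟨V, polarIsometry_mul_conjTranspose_mul_self _, le_inv_two_smul_of_add_self_le ?_⟩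
  calc CFC.abs (A + B) + CFC.abs (A + B) = Vᴴ * (A + B) + (A + B)ᴴ * V := by
        rw [conjTranspose_polarIsometry_mul_self, conjTranspose_mul_polarIsometry]
    _ = (Vᴴ * A + Aᴴ * V) + (Vᴴ * B + Bᴴ * V) := by
        rw [mul_add, conjTranspose_add, add_mul]; abel
    _ ≤ (CFC.abs A + Vᴴ * CFC.abs Aᴴ * V) + (CFC.abs B + Vᴴ * CFC.abs Bᴴ * V) :=
        add_le_add (conjTranspose_mul_add_conjTranspose_mul_le A V)
          (conjTranspose_mul_add_conjTranspose_mul_le B V)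
    _ = CFC.abs A + CFC.abs B + Vᴴ * (CFC.abs Aᴴ + CFC.abs Bᴴ) * V := by
        rw [mul_add, add_mul]; abel
end
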